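/- arXiv:1806.09008 — 11 statements merged into one kernel-verified Lean document; each statement's English description precedes it below -/
import Mathlib

section
/- Let n ≥ 4 be an even integer and let a, b be real numbers with b ≠ 0 and (n−1)²a²/(4n(n−2)) ≤ b. Then for every real number t > 0, the polynomial xⁿ + t(x² + ax + b) has no real roots. -/
/-! `xⁿ ≥ 0` for even `n`, so it suffices that `x² + ax + b > 0`, i.e. that the discriminant
`a² - 4b` is negative. Since `(n-1)² = n(n-2) + 1`, the hypothesis reads
`a²/4 + a²/(4n(n-2)) ≤ b`, which gives `a² < 4b` when `a ≠ 0`, and `b > 0` when `a = 0`. -/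

theorem quadratic_pos_of_sq_lt {a b : ℝ} (h : a ^ 2 < 4 * b) (x : ℝ) : 0 < x ^ 2 + a * x + b := by
  nlinarith [sq_nonneg (2 * x + a)]

theorem sq_lt_four_mul_of_add_one_mul_sq_le {a b c : ℝ} (hc : 0 < c) (hb : b ≠ 0)
    (h : (c + 1) * a ^ 2 ≤ 4 * c * b) : a ^ 2 < 4 * b := by
  rcases eq_or_ne a 0 with rfl | ha
  · have hb_nonneg : 0 ≤ b := by nlinarith
    linarith [hb_nonneg.lt_of_ne' hb]
  · have : 0 < a ^ 2 := by positivity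
    nlinarith

/-- For even `n ≥ 4`, `b ≠ 0` and `(n−1)²a²/(4n(n−2)) ≤ b`, the quadrinomial
`xⁿ + t(x² + ax + b)` has no real roots for any `t > 0`. -/
theorem quadrinomial_no_real_roots (n : ℕ) (hn : 4 ≤ n) (hne : Even n) (a b : ℝ)
    (hb : b ≠ 0) (hab : ((n : ℝ) - 1) ^ 2 * a ^ 2 / (4 * n * ((n : ℝ) - 2)) ≤ b) :
    ∀ t : ℝ, 0 < t → ∀ x : ℝ, x ^ n + t * (x ^ 2 + a * x + b) ≠ 0 := by
  intro t ht x
  have hn4 : (4 : ℝ) ≤ n := by exact_mod_cast hn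
  have hc : 0 < (n : ℝ) * (n - 2) := by nlinarith
  have hdisc : a ^ 2 < 4 * b := by
    refine sq_lt_four_mul_of_add_one_mul_sq_le hc hb ?_
    rw [div_le_iff₀ (by linarith)] at hab
    linarith
  have hquad := mul_pos ht (quadratic_pos_of_sq_lt hdisc x)
  exact (add_pos_of_nonneg_of_pos (hne.pow_nonneg x) hquad).ne'
end

section
/- Let s ≥ 1 and n > s be integers, and let g(x) = Σ_{k=0}^{s} r_{s−k} x^{s−k} be a real polynomial of degree s (so r_s ≠ 0) that is separable and has exactly γ distinct real roots, where 0 ≤ γ ≤ s. Let f(t;x) = xⁿ + t·g(x), let P(t) be the discriminant of f(t;x) with respect to x, regarded as a polynomial in t, and let α = max{ α ∈ ℝ : P(α) = 0 }. Then for every real number t > α, the number of distinct real roots of f(t;x) equals: γ + 1 if n − s is odd; γ if n − s is even and r_s > 0; and γ + 2 if n − s is even and r_s < 0. -/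
/-!
For `g(x) ≠ 0`, `x` is a root of `xⁿ + t·g(x)` iff `φ(x) = t`, where `φ(x) = -xⁿ / g(x)` is
`rootParam n g`. If `x` is a critical point of `φ` and `u = φ(x)`, then `x` is a double root of
`xⁿ + u·g`, so `P(u) = 0` and `u ≤ α`: for `t > α` every critical value of `φ` lies below `t`.
Hence no local maximum of `φ` reaches the level `t`, and on an interval where `φ` is continuous the
equation `φ = t` has exactly as many solutions as there are ends of the interval at which
`φ → +∞`. After dividing `g` by the power of `x` it contains (which changes both root counts by the
same amount), the poles of `φ` are simple roots of `g`, at each of which `φ` changes sign; so every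
pole contributes exactly one such end, and the two ends at `±∞`, where `φ(x) ∼ -x^{n-s}/r_s`, give
the correction term.
-/

open Polynomial

/-- The discriminant of a real polynomial `f` of degree `n` with leading coefficient `c`,
computed via the formula `Δ(f) = (−1)^{n(n−1)/2} · Res(f, f′) / c
= (−1)^{n(n−1)/2} · c^{n−2} · ∏_{f(r)=0} f′(r)`, the product running over the roots of `f`
(with multiplicity) in the algebraic closure `ℂ`. -/
noncomputable def polyDisc (f : Polynomial ℝ) : ℂ :=
  (-1 : ℂ) ^ (f.natDegree * (f.natDegree - 1) / 2) *
    ((algebraMap ℝ ℂ) f.leadingCoeff) ^ (f.natDegree - 2) *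
    (((f.map (algebraMap ℝ ℂ)).roots).map
      fun z => Polynomial.eval z (Polynomial.derivative (f.map (algebraMap ℝ ℂ)))).prod

open Filter Topology Set

def atTopOrBot {α : Type*} [Preorder α] (b : Bool) : Filter α := cond b atTop atBot

def IsLeftEnd (l : Filter ℝ) (U : Set ℝ) : Prop := ∀ x ∈ U, ∀ᶠ y in l, y < x ∧ y ∈ U

def IsRightEnd (l : Filter ℝ) (U : Set ℝ) : Prop := ∀ x ∈ U, ∀ᶠ y in l, x < y ∧ y ∈ U

def HasSignChangingPoleAt (φ : ℝ → ℝ) (w : ℝ) : Prop :=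
  ∃ L : Bool, Tendsto φ (𝓝[<] w) (atTopOrBot L) ∧ Tendsto φ (𝓝[>] w) (atTopOrBot !L)

structure CriticalValuesBelow (φ : ℝ → ℝ) (U : Set ℝ) (t : ℝ) : Prop where
  ordConnected : U.OrdConnected
  continuousOn : ContinuousOn φ U
  lt_of_deriv_eq_zero : ∀ x ∈ U, deriv φ x = 0 → φ x < t

section LevelSets

variable {U : Set ℝ} {φ : ℝ → ℝ} {t : ℝ}

lemma IsLeftEnd.inter_Iio {l : Filter ℝ} (h : IsLeftEnd l U) (w : ℝ) :
    IsLeftEnd l (U ∩ Iio w) := fun x hx =>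
  (h x hx.1).mono fun _ hy => ⟨hy.1, hy.2, hy.1.trans hx.2⟩

lemma IsRightEnd.inter_Ioi {l : Filter ℝ} (h : IsRightEnd l U) (w : ℝ) :
    IsRightEnd l (U ∩ Ioi w) := fun x hx =>
  (h x hx.1).mono fun _ hy => ⟨hy.1, hy.2, hx.2.trans hy.1⟩

lemma IsLeftEnd.nonempty_inter_Iio {l : Filter ℝ} [l.NeBot] (h : IsLeftEnd l U) {w : ℝ}
    (hw : w ∈ U) : (U ∩ Iio w).Nonempty :=
  let ⟨y, hy⟩ := (h w hw).exists
  ⟨y, hy.2, hy.1⟩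

lemma IsRightEnd.nonempty_inter_Ioi {l : Filter ℝ} [l.NeBot] (h : IsRightEnd l U) {w : ℝ}
    (hw : w ∈ U) : (U ∩ Ioi w).Nonempty :=
  let ⟨y, hy⟩ := (h w hw).exists
  ⟨y, hy.2, hy.1⟩

lemma isRightEnd_nhdsLT (hU : U.OrdConnected) {w : ℝ} (hw : w ∈ U) :
    IsRightEnd (𝓝[<] w) (U ∩ Iio w) := fun x hx => by
  filter_upwards [Ioo_mem_nhdsLT hx.2] with y hy
  exact ⟨hy.1, hU.out hx.1 hw (Ioo_subset_Icc_self hy), hy.2⟩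

lemma isLeftEnd_nhdsGT (hU : U.OrdConnected) {w : ℝ} (hw : w ∈ U) :
    IsLeftEnd (𝓝[>] w) (U ∩ Ioi w) := fun x hx => by
  filter_upwards [Ioo_mem_nhdsGT hx.2] with y hy
  exact ⟨hy.2, hU.out hw hx.1 (Ioo_subset_Icc_self hy), hy.1⟩

namespace CriticalValuesBelow

lemma apply_lt_of_mem_Ioo (h : CriticalValuesBelow φ U t) {a b c : ℝ} (ha : a ∈ U) (hb : b ∈ U)
    (hc : c ∈ Ioo a b) (hφa : φ a ≤ t) (hφb : φ b ≤ t) : φ c < t := by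
  by_contra! htc
  have hsub : Icc a b ⊆ U := h.ordConnected.out ha hb
  obtain ⟨m, hm, hmax⟩ :=
    isCompact_Icc.exists_isMaxOn ⟨c, Ioo_subset_Icc_self hc⟩ (h.continuousOn.mono hsub)
  -- if the maximum sits at an endpoint, its value is `≤ t ≤ φ c`, so `c` is a maximum too
  obtain ⟨d, hd, hdmax, htd⟩ : ∃ d ∈ Ioo a b, IsMaxOn φ (Icc a b) d ∧ t ≤ φ d := by
    by_cases hm' : m ∈ Ioo a b
    · exact ⟨m, hm', hmax, htc.trans (hmax (Ioo_subset_Icc_self hc))⟩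
    · have hφm : φ m ≤ t := by
        rcases eq_endpoints_or_mem_Ioo_of_mem_Icc hm with rfl | rfl | h
        exacts [hφa, hφb, absurd h hm']
      exact ⟨c, hc, fun y hy => (hmax hy).trans (hφm.trans htc), htc⟩
  have hloc : IsLocalMax φ d := hdmax.isLocalMax (Icc_mem_nhds hd.1 hd.2)
  exact (h.lt_of_deriv_eq_zero d (hsub (Ioo_subset_Icc_self hd)) hloc.deriv_eq_zero).not_ge htd

lemma exists_apply_lt_of_apply_lt_apply (h : CriticalValuesBelow φ U t) {a b x : ℝ} (ha : a ∈ U)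
    (hb : b ∈ U) (hx : x ∈ Icc a b) (hxa : φ x < φ a) (hxb : φ x < φ b) : ∃ c ∈ U, φ c < t := by
  have hsub : Icc a b ⊆ U := h.ordConnected.out ha hb
  obtain ⟨c, hc, hmin⟩ := isCompact_Icc.exists_isMinOn ⟨x, hx⟩ (h.continuousOn.mono hsub)
  have hca : c ≠ a := by rintro rfl; exact (hmin hx).not_gt hxa
  have hcb : c ≠ b := by rintro rfl; exact (hmin hx).not_gt hxb
  have hc' : c ∈ Ioo a b := ⟨lt_of_le_of_ne hc.1 hca.symm, lt_of_le_of_ne hc.2 hcb⟩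
  have hloc : IsLocalMin φ c := hmin.isLocalMin (Icc_mem_nhds hc'.1 hc'.2)
  exact ⟨c, hsub hc, h.lt_of_deriv_eq_zero c (hsub hc) hloc.deriv_eq_zero⟩

lemma encard_inter_preimage_inter_Ioi (h : CriticalValuesBelow φ U t) {a : ℝ} (ha : a ∈ U)
    (hφa : φ a < t) {l : Filter ℝ} [l.NeBot] (hl : IsRightEnd l U) {L : Bool}
    (hL : Tendsto φ l (atTopOrBot L)) : (U ∩ φ ⁻¹' {t} ∩ Ioi a).encard = L.toNat := by
  have hlow : ∀ x ∈ U ∩ φ ⁻¹' {t} ∩ Ioi a, ∀ y ∈ U, x < y → t < φ y := fun x hx y hy hxy =>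
    lt_of_not_ge fun hφy => (h.apply_lt_of_mem_Ioo ha hy ⟨hx.2, hxy⟩ hφa.le hφy).ne hx.1.2
  cases L
  · rw [Bool.toNat_false, Nat.cast_zero, encard_eq_zero, eq_empty_iff_forall_notMem]
    intro x hx
    obtain ⟨y, ⟨hxy, hy⟩, hφy⟩ :=
      ((hl x hx.1.1).and (hL.eventually (eventually_lt_atBot t))).exists
    exact (hlow x hx y hy hxy).not_gt hφy
  · obtain ⟨b, ⟨hab, hb⟩, hφb⟩ := ((hl a ha).and (hL.eventually (eventually_gt_atTop t))).exists
    have hsub : Icc a b ⊆ U := h.ordConnected.out ha hb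
    obtain ⟨c, hc, hφc⟩ := intermediate_value_Ioo hab.le (h.continuousOn.mono hsub) ⟨hφa, hφb⟩
    have hcS : c ∈ U ∩ φ ⁻¹' {t} ∩ Ioi a := ⟨⟨hsub (Ioo_subset_Icc_self hc), hφc⟩, hc.1⟩
    rw [Bool.toNat_true, Nat.cast_one, encard_eq_one]
    refine ⟨c, eq_singleton_iff_unique_mem.2 ⟨hcS, fun x hx => ?_⟩⟩
    rcases lt_trichotomy x c with hxc | rfl | hcx
    · exact absurd hcS.1.2 (hlow x hx c hcS.1.1 hxc).ne'
    · rfl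
    · exact absurd hx.1.2 (hlow c hcS x hx.1.1 hcx).ne'

lemma encard_inter_preimage_inter_Iio (h : CriticalValuesBelow φ U t) {a : ℝ} (ha : a ∈ U)
    (hφa : φ a < t) {l : Filter ℝ} [l.NeBot] (hl : IsLeftEnd l U) {L : Bool}
    (hL : Tendsto φ l (atTopOrBot L)) : (U ∩ φ ⁻¹' {t} ∩ Iio a).encard = L.toNat := by
  have hlow : ∀ x ∈ U ∩ φ ⁻¹' {t} ∩ Iio a, ∀ y ∈ U, y < x → t < φ y := fun x hx y hy hyx =>
    lt_of_not_ge fun hφy => (h.apply_lt_of_mem_Ioo hy ha ⟨hyx, hx.2⟩ hφy hφa.le).ne hx.1.2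
  cases L
  · rw [Bool.toNat_false, Nat.cast_zero, encard_eq_zero, eq_empty_iff_forall_notMem]
    intro x hx
    obtain ⟨y, ⟨hyx, hy⟩, hφy⟩ :=
      ((hl x hx.1.1).and (hL.eventually (eventually_lt_atBot t))).exists
    exact (hlow x hx y hy hyx).not_gt hφy
  · obtain ⟨b, ⟨hba, hb⟩, hφb⟩ := ((hl a ha).and (hL.eventually (eventually_gt_atTop t))).exists
    have hsub : Icc b a ⊆ U := h.ordConnected.out hb ha
    obtain ⟨c, hc, hφc⟩ := intermediate_value_Ioo' hba.le (h.continuousOn.mono hsub) ⟨hφa, hφb⟩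
    have hcS : c ∈ U ∩ φ ⁻¹' {t} ∩ Iio a := ⟨⟨hsub (Ioo_subset_Icc_self hc), hφc⟩, hc.2⟩
    rw [Bool.toNat_true, Nat.cast_one, encard_eq_one]
    refine ⟨c, eq_singleton_iff_unique_mem.2 ⟨hcS, fun x hx => ?_⟩⟩
    rcases lt_trichotomy x c with hxc | rfl | hcx
    · exact absurd hx.1.2 (hlow c hcS x hx.1.1 hxc).ne'
    · rfl
    · exact absurd hcS.1.2 (hlow x hx c hcS.1.1 hcx).ne'

lemma exists_apply_lt (h : CriticalValuesBelow φ U t) (hne : U.Nonempty)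
    {la lb : Filter ℝ} [la.NeBot] [lb.NeBot] (hla : IsLeftEnd la U) (hlb : IsRightEnd lb U)
    {La Lb : Bool} (hLa : Tendsto φ la (atTopOrBot La)) (hLb : Tendsto φ lb (atTopOrBot Lb)) :
    ∃ a ∈ U, φ a < t := by
  obtain ⟨x, hx⟩ := hne
  cases La
  · obtain ⟨a, ⟨-, ha⟩, hφa⟩ := ((hla x hx).and (hLa.eventually (eventually_lt_atBot t))).exists
    exact ⟨a, ha, hφa⟩
  cases Lb
  · obtain ⟨b, ⟨-, hb⟩, hφb⟩ := ((hlb x hx).and (hLb.eventually (eventually_lt_atBot t))).exists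
    exact ⟨b, hb, hφb⟩
  obtain ⟨a, ⟨hax, ha⟩, hφa⟩ :=
    ((hla x hx).and (hLa.eventually (eventually_gt_atTop (φ x)))).exists
  obtain ⟨b, ⟨hxb, hb⟩, hφb⟩ :=
    ((hlb x hx).and (hLb.eventually (eventually_gt_atTop (φ x)))).exists
  exact h.exists_apply_lt_of_apply_lt_apply ha hb ⟨hax.le, hxb.le⟩ hφa hφb

end CriticalValuesBelow

lemma encard_eq_encard_inter_Iio_add_encard_inter_Ioi {S : Set ℝ} {a : ℝ} (ha : a ∉ S) :
    S.encard = (S ∩ Iio a).encard + (S ∩ Ioi a).encard := by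
  have hdisj : Disjoint (S ∩ Iio a) (S ∩ Ioi a) :=
    ((Iio_disjoint_Ici le_rfl).mono_right Ioi_subset_Ici_self).mono inter_subset_right
      inter_subset_right
  rw [← encard_union_eq hdisj, ← inter_union_distrib_left]
  congr
  refine (inter_eq_left.2 fun x hx => ?_).symm
  rcases lt_trichotomy x a with h | rfl | h
  exacts [Or.inl h, absurd hx ha, Or.inr h]

lemma CriticalValuesBelow.encard_inter_preimage (h : CriticalValuesBelow φ U t)
    (hne : U.Nonempty) {la lb : Filter ℝ} [la.NeBot] [lb.NeBot] (hla : IsLeftEnd la U)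
    (hlb : IsRightEnd lb U) {La Lb : Bool} (hLa : Tendsto φ la (atTopOrBot La))
    (hLb : Tendsto φ lb (atTopOrBot Lb)) :
    (U ∩ φ ⁻¹' {t}).encard = La.toNat + Lb.toNat := by
  obtain ⟨a, ha, hφa⟩ := h.exists_apply_lt hne hla hlb hLa hLb
  rw [encard_eq_encard_inter_Iio_add_encard_inter_Ioi fun h => hφa.ne h.2,
    h.encard_inter_preimage_inter_Iio ha hφa hla hLa,
    h.encard_inter_preimage_inter_Ioi ha hφa hlb hLb]

theorem encard_inter_preimage_of_poles {la : Filter ℝ} [la.NeBot] {La : Bool}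
    (hLa : Tendsto φ la (atTopOrBot La)) (W : Finset ℝ)
    (hpole : ∀ w ∈ W, HasSignChangingPoleAt φ w) (hWt : ∀ w ∈ W, φ w ≠ t)
    (hU : U.OrdConnected) (hne : U.Nonempty) (hWU : ↑W ⊆ U) (hφ : ContinuousOn φ (U \ W))
    (hcrit : ∀ x ∈ U \ W, deriv φ x = 0 → φ x < t) (hla : IsLeftEnd la U)
    {lb : Filter ℝ} [lb.NeBot] {Lb : Bool} (hlb : IsRightEnd lb U)
    (hLb : Tendsto φ lb (atTopOrBot Lb)) :
    (U ∩ φ ⁻¹' {t}).encard = W.card + La.toNat + Lb.toNat := by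
  induction W using Finset.induction_on_max generalizing U lb Lb with
  | empty =>
    simp only [Finset.coe_empty, sdiff_empty] at hφ hcrit
    rw [CriticalValuesBelow.encard_inter_preimage ⟨hU, hφ, hcrit⟩ hne hla hlb hLa hLb,
      Finset.card_empty, Nat.cast_zero, zero_add]
  | insert w W hlt ih =>
    have hwW : w ∈ insert w W := Finset.mem_insert_self w W
    have hw : w ∈ U := hWU hwW
    obtain ⟨L, hleft, hright⟩ := hpole w hwW
    have hright_sub : U ∩ Ioi w ⊆ U \ ↑(insert w W) := fun x hx =>
      ⟨hx.1, fun hxW => by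
        rcases Finset.mem_insert.1 hxW with rfl | h
        exacts [(mem_Ioi.1 hx.2).false, lt_asymm hx.2 (hlt x h)]⟩
    have hleft_sub : (U ∩ Iio w) \ W ⊆ U \ ↑(insert w W) := fun x hx =>
      ⟨hx.1.1, fun hxW => by
        rcases Finset.mem_insert.1 hxW with rfl | h
        exacts [(mem_Iio.1 hx.1.2).false, hx.2 h]⟩
    have hright_count := CriticalValuesBelow.encard_inter_preimage
      ⟨hU.inter ordConnected_Ioi, hφ.mono hright_sub, fun x hx => hcrit x (hright_sub hx)⟩
      (hlb.nonempty_inter_Ioi hw) (isLeftEnd_nhdsGT hU hw) (hlb.inter_Ioi w) hright hLb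
    have hleft_count := ih (fun v hv => hpole v (Finset.mem_insert_of_mem hv))
      (fun v hv => hWt v (Finset.mem_insert_of_mem hv)) (hU.inter ordConnected_Iio)
      (hla.nonempty_inter_Iio hw) (fun v hv => ⟨hWU (Finset.mem_insert_of_mem hv), hlt v hv⟩)
      (hφ.mono hleft_sub) (fun x hx => hcrit x (hleft_sub hx)) (hla.inter_Iio w)
      (isRightEnd_nhdsLT hU hw) hleft
    rw [encard_eq_encard_inter_Iio_add_encard_inter_Ioi fun h => hWt w hwW h.2, inter_right_comm,
      hleft_count, inter_right_comm, hright_count,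
      Finset.card_insert_of_notMem fun h => (hlt w h).false]
    cases L <;> simp only [Bool.not_false, Bool.not_true, Bool.toNat_false, Bool.toNat_true,
      Nat.cast_add, Nat.cast_zero, Nat.cast_one] <;> ring

end LevelSets

-- At the roots of `p` this takes the junk value `0`.
noncomputable def rootParam (N : ℕ) (p : ℝ[X]) (x : ℝ) : ℝ := -x ^ N / p.eval x

section RootParam

variable {N : ℕ} {p : ℝ[X]} {t x : ℝ}

lemma isRoot_X_pow_add_C_mul_iff (ht : t ≠ 0) (hp0 : p.eval 0 ≠ 0) :
    (X ^ N + C t * p).IsRoot x ↔ rootParam N p x = t := by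
  simp only [IsRoot, eval_add, eval_pow, eval_X, eval_mul, eval_C, rootParam]
  by_cases hx : p.eval x = 0
  · have hx0 : x ≠ 0 := by rintro rfl; exact hp0 hx
    simp only [hx, mul_zero, add_zero, div_zero]
    exact iff_of_false (pow_ne_zero N hx0) (Ne.symm ht)
  · rw [div_eq_iff hx]
    constructor <;> intro h <;> linarith

lemma hasDerivAt_rootParam (hx : p.eval x ≠ 0) :
    HasDerivAt (rootParam N p)
      ((-(N * x ^ (N - 1)) * p.eval x + x ^ N * (derivative p).eval x) / p.eval x ^ 2) x :=
  (((hasDerivAt_pow N x).neg).div (p.hasDerivAt x) hx).congr_deriv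
    (by simp only [Pi.neg_apply]; ring)

lemma isRoot_and_isRoot_derivative_of_deriv_rootParam_eq_zero (hx : p.eval x ≠ 0)
    (h : deriv (rootParam N p) x = 0) :
    (X ^ N + C (rootParam N p x) * p).IsRoot x ∧
      (derivative (X ^ N + C (rootParam N p x) * p)).IsRoot x := by
  rw [(hasDerivAt_rootParam hx).deriv, div_eq_zero_iff, or_iff_left (pow_ne_zero 2 hx)] at h
  simp only [IsRoot, derivative_add, derivative_X_pow, derivative_C_mul, eval_add, eval_pow,
    eval_X, eval_mul, eval_C, rootParam]
  constructor
  · field_simp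
    ring
  · field_simp
    linear_combination -h

lemma hasSignChangingPoleAt_div_sub {F : ℝ → ℝ} {a : ℝ} (hF : ContinuousAt F a) (ha : F a ≠ 0) :
    HasSignChangingPoleAt (fun x => F x / (x - a)) a := by
  have hsub : Tendsto (fun x => x - a) (𝓝 a) (𝓝 0) := by
    simpa using (continuous_sub_right a).tendsto a
  have hleft : Tendsto (fun x => (x - a)⁻¹) (𝓝[<] a) atBot :=
    tendsto_inv_nhdsLT_zero.comp (tendsto_nhdsWithin_iff.2 ⟨hsub.mono_left nhdsWithin_le_nhds,
      eventually_nhdsWithin_of_forall fun x hx => mem_Iio.2 (sub_neg.2 hx)⟩)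
  have hright : Tendsto (fun x => (x - a)⁻¹) (𝓝[>] a) atTop :=
    tendsto_inv_nhdsGT_zero.comp (tendsto_nhdsWithin_iff.2 ⟨hsub.mono_left nhdsWithin_le_nhds,
      eventually_nhdsWithin_of_forall fun x hx => mem_Ioi.2 (sub_pos.2 hx)⟩)
  have hFl : Tendsto F (𝓝[<] a) (𝓝 (F a)) := hF.tendsto.mono_left nhdsWithin_le_nhds
  have hFr : Tendsto F (𝓝[>] a) (𝓝 (F a)) := hF.tendsto.mono_left nhdsWithin_le_nhds
  simp only [HasSignChangingPoleAt, div_eq_mul_inv]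
  rcases ha.lt_or_gt with hneg | hpos
  · exact ⟨true, hFl.neg_mul_atBot hneg hleft, hFr.neg_mul_atTop hneg hright⟩
  · exact ⟨false, hFl.pos_mul_atBot hpos hleft, hFr.pos_mul_atTop hpos hright⟩

lemma hasSignChangingPoleAt_rootParam (hp : p.Separable) {a : ℝ} (ha : a ≠ 0)
    (hpa : p.IsRoot a) : HasSignChangingPoleAt (rootParam N p) a := by
  set q := p /ₘ (X - C a)
  have hpq : (X - C a) * q = p := mul_divByMonic_eq_iff_isRoot.2 hpa
  -- `q(a) = p'(a)`, which is nonzero since `p` is separable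
  have hqa : q.eval a ≠ 0 := by
    have := hp.eval₂_derivative_ne_zero (RingHom.id ℝ) hpa
    rwa [← hpq, eval₂_id, derivative_mul, eval_add, eval_mul, eval_mul, eval_sub, eval_X, eval_C,
      sub_self, zero_mul, derivative_sub, derivative_X, derivative_C, sub_zero, eval_one,
      one_mul, add_zero] at this
  have hrep : rootParam N p = fun x => (-x ^ N / q.eval x) / (x - a) := by
    funext x
    rw [rootParam, ← hpq, eval_mul, eval_sub, eval_X, eval_C, div_div, mul_comm]
  rw [hrep]
  exact hasSignChangingPoleAt_div_sub ((continuous_pow N).neg.continuousAt.div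
    q.continuous.continuousAt hqa) (div_ne_zero (neg_ne_zero.2 (pow_ne_zero N ha)) hqa)

lemma tendsto_rootParam_atTop (hp : p ≠ 0) (hN : p.natDegree < N) :
    Tendsto (rootParam N p) atTop (atTopOrBot (decide (p.leadingCoeff < 0))) := by
  have hrep : rootParam N p = fun x => (-X ^ N : ℝ[X]).eval x / p.eval x := by
    funext x
    simp [rootParam]
  have hdeg : p.degree < (-X ^ N : ℝ[X]).degree := by
    rw [degree_neg, degree_X_pow]
    exact degree_le_natDegree.trans_lt (by exact_mod_cast hN)
  have hlc : (-X ^ N : ℝ[X]).leadingCoeff = -1 := by simp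
  rw [hrep]
  rcases (leadingCoeff_ne_zero.2 hp).lt_or_gt with hneg | hpos
  · rw [decide_eq_true hneg]
    exact div_tendsto_atTop_of_degree_gt' _ _ hdeg
      (by rw [hlc]; exact div_pos_of_neg_of_neg (by norm_num) hneg)
  · rw [decide_eq_false hpos.not_gt]
    exact div_tendsto_atBot_of_degree_gt' _ _ hdeg
      (by rw [hlc]; exact div_neg_of_neg_of_pos (by norm_num) hpos)

lemma rootParam_neg : rootParam N p (-x) = rootParam N (C ((-1) ^ N) * p.comp (-X)) x := by
  simp only [rootParam, eval_mul, eval_C, eval_comp, eval_neg, eval_X, neg_pow x]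
  rw [← div_div]
  congr 1
  rw [div_eq_mul_inv, ← inv_pow, inv_neg_one]
  ring

lemma tendsto_rootParam_atBot (hp : p ≠ 0) (hN : p.natDegree < N) :
    Tendsto (rootParam N p) atBot
      (atTopOrBot (decide ((-1) ^ (N - p.natDegree) * p.leadingCoeff < 0))) := by
  set q := C ((-1 : ℝ) ^ N) * p.comp (-X)
  have hqdeg : q.natDegree = p.natDegree := by
    rw [natDegree_C_mul (pow_ne_zero N (by norm_num)), natDegree_comp]
    simp
  have hqlc : q.leadingCoeff = (-1) ^ (N - p.natDegree) * p.leadingCoeff := by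
    obtain ⟨k, hk⟩ : ∃ k, N = p.natDegree + k := ⟨N - p.natDegree, by omega⟩
    have hsq : ((-1 : ℝ) ^ p.natDegree) ^ 2 = 1 := by
      rw [← pow_mul, mul_comm, pow_mul, neg_one_sq, one_pow]
    rw [leadingCoeff_mul, leadingCoeff_C, leadingCoeff_comp (by simp), hk, Nat.add_sub_cancel_left]
    simp only [leadingCoeff_neg, leadingCoeff_X, pow_add]
    linear_combination ((-1) ^ k * p.leadingCoeff) * hsq
  have hq : q ≠ 0 := fun h => by
    rw [h, leadingCoeff_zero] at hqlc
    exact mul_ne_zero (pow_ne_zero _ (by norm_num)) (leadingCoeff_ne_zero.2 hp) hqlc.symm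
  have h := (tendsto_rootParam_atTop hq (hqdeg ▸ hN)).comp tendsto_neg_atBot_atTop
  rw [hqlc] at h
  convert h using 1
  funext x
  rw [Function.comp_apply, ← rootParam_neg, neg_neg]

end RootParam

section PolynomialFacts

variable {R : Type*}

lemma coeff_sum_range_C_mul_X_pow [Semiring R] (r : ℕ → R) (s k : ℕ) :
    (∑ j ∈ Finset.range (s + 1), C (r j) * X ^ j).coeff k = if k ≤ s then r k else 0 := by
  simp

lemma natDegree_sum_range_C_mul_X_pow [Semiring R] {r : ℕ → R} {s : ℕ} (hrs : r s ≠ 0) :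
    (∑ j ∈ Finset.range (s + 1), C (r j) * X ^ j).natDegree = s :=
  natDegree_eq_of_le_of_coeff_ne_zero
    (natDegree_le_iff_coeff_eq_zero.2 fun k hk => by
      rw [coeff_sum_range_C_mul_X_pow, if_neg (not_le.2 (by exact_mod_cast hk))])
    (by rwa [coeff_sum_range_C_mul_X_pow, if_pos le_rfl])

lemma leadingCoeff_sum_range_C_mul_X_pow [Semiring R] {r : ℕ → R} {s : ℕ} (hrs : r s ≠ 0) :
    (∑ j ∈ Finset.range (s + 1), C (r j) * X ^ j).leadingCoeff = r s := by
  rw [leadingCoeff, natDegree_sum_range_C_mul_X_pow hrs, coeff_sum_range_C_mul_X_pow,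
    if_pos le_rfl]

lemma X_pow_add_C_mul_ne_zero [Semiring R] [Nontrivial R] {g : R[X]} {n : ℕ}
    (hg : g.natDegree < n) (u : R) : X ^ n + C u * g ≠ 0 :=
  (monic_X_pow_add (degree_le_natDegree.trans_lt
    (by exact_mod_cast (natDegree_C_mul_le u g).trans_lt hg))).ne_zero

lemma exists_eq_X_pow_mul_of_ne_zero [CommRing R] {p : R[X]} (hp : p ≠ 0) :
    ∃ m q, p = X ^ m * q ∧ q.eval 0 ≠ 0 := by
  obtain ⟨q, hpq, hdvd⟩ := exists_eq_pow_rootMultiplicity_mul_and_not_dvd p hp 0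
  refine ⟨_, q, by simpa using hpq, fun h => hdvd ?_⟩
  simpa [X_dvd_iff, coeff_zero_eq_eval_zero] using h

lemma isRoot_mul_and_isRoot_derivative_mul [CommRing R] (p : R[X]) {q : R[X]} {x : R}
    (h : q.IsRoot x) (h' : (derivative q).IsRoot x) :
    (p * q).IsRoot x ∧ (derivative (p * q)).IsRoot x :=
  ⟨by simp [h.eq_zero], by simp [derivative_mul, h.eq_zero, h'.eq_zero]⟩

lemma encard_setOf_isRoot_X_pow_mul {q : ℝ[X]} (hq : q.eval 0 ≠ 0) (m : ℕ) :
    {x | (X ^ m * q).IsRoot x}.encard = {x | q.IsRoot x}.encard + if m = 0 then 0 else 1 := by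
  rcases Nat.eq_zero_or_pos m with rfl | hm
  · simp
  · have hset : {x | (X ^ m * q).IsRoot x} = insert 0 {x | q.IsRoot x} := by
      ext x
      simp [hm.ne']
    rw [hset, encard_insert_of_notMem (show (0 : ℝ) ∉ {x | q.IsRoot x} from hq), if_neg hm.ne']

lemma polyDisc_eq_zero_of_isRoot {f : ℝ[X]} (hf : f ≠ 0) {x : ℝ} (h : f.IsRoot x)
    (h' : (derivative f).IsRoot x) : polyDisc f = 0 := by
  have hroot : algebraMap ℝ ℂ x ∈ (f.map (algebraMap ℝ ℂ)).roots := by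
    rw [mem_roots (Polynomial.map_ne_zero hf), IsRoot, eval_map_algebraMap,
      aeval_algebraMap_apply, coe_aeval_eq_eval, h.eq_zero, map_zero]
  have hzero : (0 : ℂ) ∈ (f.map (algebraMap ℝ ℂ)).roots.map
      fun z => (derivative (f.map (algebraMap ℝ ℂ))).eval z := by
    refine Multiset.mem_map.2 ⟨_, hroot, ?_⟩
    rw [derivative_map, eval_map_algebraMap, aeval_algebraMap_apply, coe_aeval_eq_eval,
      h'.eq_zero, map_zero]
  rw [polyDisc, Multiset.prod_eq_zero hzero, mul_zero]

end PolynomialFacts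

theorem encard_setOf_isRoot_X_pow_add_C_mul_of_eval_zero_ne_zero {N : ℕ} {p : ℝ[X]} {t : ℝ}
    (hp : p.Separable) (hp0 : p.eval 0 ≠ 0) (hN : p.natDegree < N) (ht : t ≠ 0)
    (hcrit : ∀ u x, (X ^ N + C u * p).IsRoot x → (derivative (X ^ N + C u * p)).IsRoot x →
      u < t) :
    {x | (X ^ N + C t * p).IsRoot x}.encard = {x | p.IsRoot x}.encard +
      (if Odd (N - p.natDegree) then 1 else if 0 < p.leadingCoeff then 0 else 2 : ℕ) := by
  have hp' : p ≠ 0 := fun h => hp0 (by simp [h])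
  set W := p.roots.toFinset
  have hW : ∀ x, x ∈ W ↔ p.IsRoot x := fun x => by simp [W, mem_roots hp']
  have hnotW : ∀ x ∉ W, p.eval x ≠ 0 := fun x hx h => hx ((hW x).2 h)
  have hcount := encard_inter_preimage_of_poles (t := t) (tendsto_rootParam_atBot hp' hN) W
    (fun w hw => hasSignChangingPoleAt_rootParam hp (by rintro rfl; exact hp0 ((hW 0).1 hw))
      ((hW w).1 hw))
    (fun w hw => by simp [rootParam, ((hW w).1 hw).eq_zero, ht.symm]) ordConnected_univ
    univ_nonempty (subset_univ _)
    (fun x hx => (hasDerivAt_rootParam (hnotW x hx.2)).continuousAt.continuousWithinAt)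
    (fun x hx hd =>
      (isRoot_and_isRoot_derivative_of_deriv_rootParam_eq_zero (hnotW x hx.2) hd).elim (hcrit _ x))
    (fun x _ => (eventually_lt_atBot x).mono fun _ hy => ⟨hy, trivial⟩)
    (fun x _ => (eventually_gt_atTop x).mono fun _ hy => ⟨hy, trivial⟩)
    (tendsto_rootParam_atTop hp' hN)
  have hset : {x | (X ^ N + C t * p).IsRoot x} = univ ∩ rootParam N p ⁻¹' {t} := by
    ext x
    simpa using isRoot_X_pow_add_C_mul_iff ht hp0
  have hroots : {x | p.IsRoot x} = ↑W := by
    ext x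
    simp [hW]
  rw [hset, hcount, hroots, encard_coe_eq_coe_finsetCard, add_assoc]
  congr 1
  rcases Nat.even_or_odd (N - p.natDegree) with hk | hk <;>
    rcases (leadingCoeff_ne_zero.2 hp').lt_or_gt with hlc | hlc
  all_goals norm_num [hk.neg_one_pow, hlc, hlc.not_gt, hk, Nat.not_odd_iff_even.2]

theorem encard_setOf_isRoot_X_pow_add_C_mul {n : ℕ} {g : ℝ[X]} {t : ℝ} (hg : g.Separable)
    (hg0 : g ≠ 0) (hn : g.natDegree < n) (ht : t ≠ 0)
    (hcrit : ∀ u x, (X ^ n + C u * g).IsRoot x → (derivative (X ^ n + C u * g)).IsRoot x →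
      u < t) :
    {x | (X ^ n + C t * g).IsRoot x}.encard = {x | g.IsRoot x}.encard +
      (if Odd (n - g.natDegree) then 1 else if 0 < g.leadingCoeff then 0 else 2 : ℕ) := by
  obtain ⟨m, h, rfl, hh0⟩ := exists_eq_X_pow_mul_of_ne_zero hg0
  have hdeg : (X ^ m * h).natDegree = m + h.natDegree := by
    rw [natDegree_mul (pow_ne_zero m X_ne_zero) (right_ne_zero_of_mul hg0), natDegree_X_pow]
  have hfac : ∀ u, X ^ n + C u * (X ^ m * h) = X ^ m * (X ^ (n - m) + C u * h) := fun u => by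
    rw [mul_add, ← pow_add, Nat.add_sub_cancel' (by omega)]
    ring
  have hcount := encard_setOf_isRoot_X_pow_add_C_mul_of_eval_zero_ne_zero (N := n - m)
    hg.of_mul_right hh0 (by omega) ht fun u x h h' => hcrit u x
      ((hfac u).symm ▸ (isRoot_mul_and_isRoot_derivative_mul _ h h').1)
      ((hfac u).symm ▸ (isRoot_mul_and_isRoot_derivative_mul _ h h').2)
  have hh0' : (X ^ (n - m) + C t * h).eval 0 ≠ 0 := by
    simp [zero_pow (show n - m ≠ 0 by omega), ht, hh0]
  rw [hfac, encard_setOf_isRoot_X_pow_mul hh0', hcount, encard_setOf_isRoot_X_pow_mul hh0,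
    leadingCoeff_mul, leadingCoeff_X_pow, one_mul, hdeg, Nat.sub_sub]
  ring

theorem real_root_count_of_xn_add_t_mul_g_general
    (s n : ℕ) (hs : 1 ≤ s) (hns : s < n) (r : ℕ → ℝ)
    (g : Polynomial ℝ) (hg : g = ∑ j ∈ Finset.range (s + 1), C (r j) * X ^ j)
    (hrs : r s ≠ 0) (hsep : g.Separable)
    (γ : ℕ) (hγ : {x : ℝ | Polynomial.eval x g = 0}.ncard = γ)
    (P : ℝ → ℂ) (hP : ∀ u : ℝ, P u = polyDisc (X ^ n + C u * g))
    (α : ℝ) (hα : IsGreatest {u : ℝ | P u = 0} α) :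
    ∀ t : ℝ, α < t →
      {x : ℝ | Polynomial.eval x (X ^ n + C t * g) = 0}.ncard =
        (if Odd (n - s) then γ + 1 else if 0 < r s then γ else γ + 2) := by
  intro t hαt
  have hgdeg : g.natDegree = s := hg ▸ natDegree_sum_range_C_mul_X_pow hrs
  have hglc : g.leadingCoeff = r s := hg ▸ leadingCoeff_sum_range_C_mul_X_pow hrs
  have hg0 : g ≠ 0 := fun h => hrs (by rw [← hglc, h, leadingCoeff_zero])
  have hdouble : ∀ u x, (X ^ n + C u * g).IsRoot x → (derivative (X ^ n + C u * g)).IsRoot x →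
      u < t := by
    intro u x h h'
    have hPu : P u = 0 := by
      rw [hP]
      exact polyDisc_eq_zero_of_isRoot (X_pow_add_C_mul_ne_zero (by omega) u) h h'
    exact (hα.2 hPu).trans_lt hαt
  -- `u = 0` is a root of `P`, since `0` is a double root of `xⁿ`
  have ht : 0 < t := hdouble 0 0 (by simp; omega) (by simp [derivative_X_pow]; omega)
  have hcount := encard_setOf_isRoot_X_pow_add_C_mul hsep hg0 (by omega) ht.ne' hdouble
  rw [hgdeg, hglc, ← (finite_setOfPred_isRoot hg0).cast_ncard_eq,
    show {x | g.IsRoot x}.ncard = γ from hγ] at hcount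
  change {x | (X ^ n + C t * g).IsRoot x}.ncard = _
  rw [ncard_def, hcount, ← Nat.cast_add, ENat.toNat_natCast]
  split_ifs <;> rfl

/-- For a separable real polynomial `g(x) = Σ_{k=0}^{s} r_{s−k} x^{s−k}` of degree `s ≥ 1`
with exactly `γ` distinct real roots, and `n > s`: if `α` is the largest real root of the
discriminant `P(t)` of `f(t;x) = xⁿ + t·g(x)` (as a polynomial in `t`), then for every
`t > α` the number of distinct real roots of `f(t;x)` is `γ + 1` if `n − s` is odd,
`γ` if `n − s` is even and `r_s > 0`, and `γ + 2` if `n − s` is even and `r_s < 0`. -/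
theorem real_root_count_of_xn_add_t_mul_g
    (s n : ℕ) (hs : 1 ≤ s) (hns : s < n) (r : ℕ → ℝ)
    (g : Polynomial ℝ) (hg : g = ∑ j ∈ Finset.range (s + 1), C (r j) * X ^ j)
    (hrs : r s ≠ 0) (hsep : g.Separable)
    (γ : ℕ) (hγ : {x : ℝ | Polynomial.eval x g = 0}.ncard = γ) (hγs : γ ≤ s)
    (P : ℝ → ℂ) (hP : ∀ u : ℝ, P u = polyDisc (X ^ n + C u * g))
    (α : ℝ) (hα : IsGreatest {u : ℝ | P u = 0} α) :
    ∀ t : ℝ, α < t →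
      {x : ℝ | Polynomial.eval x (X ^ n + C t * g) = 0}.ncard =
        (if Odd (n - s) then γ + 1 else if 0 < r s then γ else γ + 2) :=
  real_root_count_of_xn_add_t_mul_g_general s n hs hns r g hg hrs hsep γ hγ P hP α hα
end

section
/- Let N ≥ 0 be an integer and let k be an integer with 0 ≤ k ≤ ⌊N/2⌋. Then Σ_{j=k}^{⌊N/2⌋} C(N+1, 2j+1)·C(j, k) = 2^{N−2k}·C(N−k, k). -/
/-!
The sums `O n = ∑ C(n, 2j+1) y^j` and `E n = ∑ C(n, 2j) y^j` are the components of
`(1 + √y)^n = E n + √y O n`, so Pascal's rule gives `O (n+1) = O n + E n`, `E (n+1) = E n + y O n`,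
and hence `O (n+2) = 2 O (n+1) + (y - 1) O n`. At `y = X + 1` the coefficient of `X^k` in `O n` is
`∑ C(n, 2j+1) C(j, k)`, and the recurrence becomes `c (n+2) (k+1) = 2 c (n+1) (k+1) + c n k`.
Writing `n = 2k + d + 1`, this is Pascal's rule for `2^d C(k+d, k)`.
-/

open Finset Polynomial Nat

section BinomialParts

variable {R : Type*} [CommSemiring R]

def oddBinomialSum (y : R) (n : ℕ) : R := ∑ j ∈ range (n + 1), (n.choose (2 * j + 1) : R) * y ^ j

def evenBinomialSum (y : R) (n : ℕ) : R := ∑ j ∈ range (n + 1), (n.choose (2 * j) : R) * y ^ j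

theorem sum_range_choose_mul_of_le {f : ℕ → ℕ} (hf : ∀ j, j ≤ f j) (g : ℕ → R) {n m : ℕ}
    (hm : n + 1 ≤ m) :
    ∑ j ∈ range m, (n.choose (f j) : R) * g j = ∑ j ∈ range (n + 1), (n.choose (f j) : R) * g j := by
  refine (sum_subset (range_subset_range.2 hm) fun j _ hj => ?_).symm
  rw [choose_eq_zero_of_lt (by grind), cast_zero, zero_mul]

theorem oddBinomialSum_succ (y : R) (n : ℕ) :
    oddBinomialSum y (n + 1) = oddBinomialSum y n + evenBinomialSum y n := by
  simp only [oddBinomialSum, evenBinomialSum, choose_succ_succ', cast_add, add_mul, sum_add_distrib]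
  rw [sum_range_choose_mul_of_le (f := fun j => 2 * j) (by omega) _ (by omega),
    sum_range_choose_mul_of_le (f := fun j => 2 * j + 1) (by omega) _ (by omega), add_comm]

theorem evenBinomialSum_succ (y : R) (n : ℕ) :
    evenBinomialSum y (n + 1) = evenBinomialSum y n + y * oddBinomialSum y n := by
  have hodd : ∑ j ∈ range (n + 1), (n.choose (2 * j + 1) : R) * y ^ (j + 1) =
      y * oddBinomialSum y n := by
    simp only [oddBinomialSum, mul_sum, pow_succ]
    exact sum_congr rfl fun _ _ => by ring
  have heven : ∑ j ∈ range (n + 1), (n.choose (2 * (j + 1)) : R) * y ^ (j + 1) + 1 =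
      evenBinomialSum y n := by
    rw [evenBinomialSum, ← sum_range_choose_mul_of_le (f := fun j => 2 * j) (by omega) _
      (le_succ (n + 1)), sum_range_succ' _ (n + 1)]
    simp
  rw [evenBinomialSum, sum_range_succ', ← heven, ← hodd]
  simp only [mul_add, mul_one, choose_succ_succ', cast_add, add_mul, sum_add_distrib, mul_zero,
    choose_zero_right, cast_one, pow_zero]
  ring

theorem oddBinomialSum_add_two (y : R) (n : ℕ) :
    oddBinomialSum y (n + 2) + oddBinomialSum y n =
      2 * oddBinomialSum y (n + 1) + y * oddBinomialSum y n := by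
  rw [oddBinomialSum_succ y (n + 1), evenBinomialSum_succ, oddBinomialSum_succ y n]
  ring

end BinomialParts

theorem coeff_oddBinomialSum_X_add_one (n k : ℕ) :
    (oddBinomialSum (X + 1 : ℕ[X]) n).coeff k =
      ∑ j ∈ range (n + 1), n.choose (2 * j + 1) * j.choose k := by
  simp only [oddBinomialSum, finsetSum_coeff, ← C_eq_natCast, coeff_C_mul, coeff_X_add_one_pow,
    cast_id]

theorem coeff_oddBinomialSum_X_add_one_add_two (n k : ℕ) :
    (oddBinomialSum (X + 1 : ℕ[X]) (n + 2)).coeff k =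
      2 * (oddBinomialSum (X + 1 : ℕ[X]) (n + 1)).coeff k +
        (X * oddBinomialSum (X + 1 : ℕ[X]) n).coeff k := by
  have h := congrArg (coeff · k) (oddBinomialSum_add_two (X + 1 : ℕ[X]) n)
  simp only [add_mul, one_mul, coeff_add, coeff_ofNat_mul] at h
  omega

theorem coeff_oddBinomialSum_X_add_one_central (k : ℕ) :
    (oddBinomialSum (X + 1 : ℕ[X]) (2 * k + 1)).coeff k = 1 := by
  rw [coeff_oddBinomialSum_X_add_one, sum_eq_single k]
  · simp
  · intro j _ hjk
    rcases lt_or_gt_of_ne hjk with hlt | hgt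
    · rw [choose_eq_zero_of_lt hlt, mul_zero]
    · rw [choose_eq_zero_of_lt (by omega), zero_mul]
  · simp only [mem_range]
    omega

theorem coeff_oddBinomialSum_X_add_one_eq : ∀ k d : ℕ,
    (oddBinomialSum (X + 1 : ℕ[X]) (2 * k + d + 1)).coeff k = 2 ^ d * (k + d).choose k
  | k, 0 => by simpa using coeff_oddBinomialSum_X_add_one_central k
  | 0, d + 1 => by
    have ih := coeff_oddBinomialSum_X_add_one_eq 0 d
    simp only [mul_zero, zero_add, choose_zero_right, mul_one] at ih ⊢
    rw [coeff_oddBinomialSum_X_add_one_add_two, coeff_X_mul_zero, ih, pow_succ]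
    ring
  | k + 1, d + 1 => by
    have hpascal : (k + 1 + (d + 1)).choose (k + 1) =
        (k + 1 + d).choose (k + 1) + (k + (d + 1)).choose k := by
      rw [show k + 1 + (d + 1) = k + d + 1 + 1 by omega, choose_succ_succ',
        show k + 1 + d = k + d + 1 by omega, show k + (d + 1) = k + d + 1 by omega, add_comm]
    rw [show 2 * (k + 1) + (d + 1) + 1 = 2 * k + d + 2 + 2 by omega,
      coeff_oddBinomialSum_X_add_one_add_two, coeff_X_mul,
      show 2 * k + d + 2 + 1 = 2 * (k + 1) + d + 1 by omega, coeff_oddBinomialSum_X_add_one_eq,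
      show 2 * k + d + 2 = 2 * k + (d + 1) + 1 by omega, coeff_oddBinomialSum_X_add_one_eq,
      hpascal, pow_succ]
    ring

theorem sum_choose_odd_mul_choose (N k : ℕ) (hk : k ≤ N / 2) :
    ∑ j ∈ Finset.Icc k (N / 2), (N + 1).choose (2 * j + 1) * j.choose k =
      2 ^ (N - 2 * k) * (N - k).choose k := by
  obtain ⟨d, rfl⟩ : ∃ d, N = 2 * k + d := ⟨N - 2 * k, by omega⟩
  have hsupport : ∑ j ∈ Icc k ((2 * k + d) / 2), (2 * k + d + 1).choose (2 * j + 1) * j.choose k =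
      ∑ j ∈ range (2 * k + d + 1 + 1), (2 * k + d + 1).choose (2 * j + 1) * j.choose k := by
    refine sum_subset (fun j hj => by grind) fun j _ hj => ?_
    rcases lt_or_ge j k with hjk | hkj
    · rw [choose_eq_zero_of_lt hjk, mul_zero]
    · rw [choose_eq_zero_of_lt (by grind), zero_mul]
  rw [hsupport, ← coeff_oddBinomialSum_X_add_one, coeff_oddBinomialSum_X_add_one_eq,
    show 2 * k + d - 2 * k = d by omega, show 2 * k + d - k = k + d by omega]
end

section
/- Let N ≥ 0 be an integer and let k be an integer with 0 ≤ k ≤ ⌈N/2⌉. Then Σ_{j=k}^{⌈N/2⌉} C(N+1, 2j)·C(j, k) = 2^{N−2k}·[ 2·C(N+1−k, k) − C(N−k, k) ] = 2^{N−2k}·[ C(N+1−k, k) + C(N−k, k−1) ]. -/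
/-!
Split by the parity of the lower index: with `E n k = ∑ C(n, 2j) C(j, k)` and
`O n k = ∑ C(n, 2j+1) C(j, k)`, Pascal's rule gives `O (n+1) = O n + E n` and
`E (n+1) k = E n k + O n k + O n (k-1)` (no last term for `k = 0`). Eliminating `E` leaves
`O (n+2) (k+1) = 2 O (n+1) (k+1) + O n k`, the recursion satisfied by `2^(n-2k) C(n-k, k)`,
so `O (n+1) k = 2^(n-2k) C(n-k, k)` for all `n, k` (both sides vanish when `2k > n`).
The theorem is then `E (N+1) = O (N+2) - O (N+1)`.
-/

open Finset

def evenChooseSum (n k : ℕ) : ℕ := ∑ j ∈ range (n + 1), n.choose (2 * j) * j.choose k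

def oddChooseSum (n k : ℕ) : ℕ := ∑ j ∈ range (n + 1), n.choose (2 * j + 1) * j.choose k

lemma oddChooseSum_succ (n k : ℕ) :
    oddChooseSum (n + 1) k = oddChooseSum n k + evenChooseSum n k := by
  rw [oddChooseSum, sum_range_succ, Nat.choose_eq_zero_of_lt (by omega), zero_mul, add_zero,
    oddChooseSum, evenChooseSum, ← sum_add_distrib]
  refine sum_congr rfl fun j _ => ?_
  rw [Nat.choose_succ_succ', add_mul, add_comm]

lemma evenChooseSum_succ (n k : ℕ) :
    evenChooseSum (n + 1) k =
      evenChooseSum n k + ∑ j ∈ range (n + 1), n.choose (2 * j + 1) * (j + 1).choose k := by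
  have hshift : evenChooseSum n k =
      ∑ j ∈ range (n + 1), n.choose (2 * (j + 1)) * (j + 1).choose k +
        n.choose 0 * (0 : ℕ).choose k := by
    rw [← sum_range_succ' (fun j => n.choose (2 * j) * j.choose k), sum_range_succ,
      Nat.choose_eq_zero_of_lt (by omega : n < 2 * (n + 1)), zero_mul, add_zero, evenChooseSum]
  have hpascal : ∀ j, (n + 1).choose (2 * (j + 1)) =
      n.choose (2 * j + 1) + n.choose (2 * (j + 1)) := fun j => Nat.choose_succ_succ' n (2 * j + 1)
  rw [evenChooseSum, sum_range_succ', hshift]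
  simp only [hpascal, add_mul, sum_add_distrib, mul_zero, Nat.choose_zero_right]
  ring

lemma oddChooseSum_add_two_zero (n : ℕ) :
    oddChooseSum (n + 2) 0 = 2 * oddChooseSum (n + 1) 0 := by
  have hodd := oddChooseSum_succ n 0
  rw [oddChooseSum_succ, evenChooseSum_succ, hodd]
  simp only [Nat.choose_zero_right, oddChooseSum]
  ring

lemma oddChooseSum_add_two_succ (n k : ℕ) :
    oddChooseSum (n + 2) (k + 1) = 2 * oddChooseSum (n + 1) (k + 1) + oddChooseSum n k := by
  have hodd := oddChooseSum_succ n (k + 1)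
  have hpascal : ∑ j ∈ range (n + 1), n.choose (2 * j + 1) * (j + 1).choose (k + 1) =
      oddChooseSum n (k + 1) + oddChooseSum n k := by
    rw [oddChooseSum, oddChooseSum, ← sum_add_distrib]
    refine sum_congr rfl fun j _ => ?_
    rw [Nat.choose_succ_succ', mul_add, add_comm]
  rw [oddChooseSum_succ, evenChooseSum_succ, hpascal, hodd]
  ring

lemma choose_succ_sub_succ (n k : ℕ) :
    (n + 1 - k).choose (k + 1) = (n - k).choose k + (n - k).choose (k + 1) := by
  rcases le_or_gt k n with h | h
  · rw [Nat.sub_add_comm h, Nat.choose_succ_succ']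
  · rw [Nat.sub_eq_zero_of_le h, Nat.sub_eq_zero_of_le h.le, Nat.choose_zero_succ,
      Nat.choose_eq_zero_of_lt (by omega : 0 < k)]

lemma oddChooseSum_succ_eq (n k : ℕ) :
    (oddChooseSum (n + 1) k : ℝ) = 2 ^ ((n : ℤ) - 2 * k) * (n - k).choose k := by
  induction n using Nat.twoStepInduction generalizing k with
  | zero => rcases k with _ | k <;> simp [oddChooseSum, sum_range_succ, Nat.choose_eq_zero_of_lt]
  | one => rcases k with _ | k <;> simp [oddChooseSum, sum_range_succ, Nat.choose_eq_zero_of_lt]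
  | more n ih₀ ih₁ =>
    rcases k with _ | k
    · rw [oddChooseSum_add_two_zero, Nat.cast_mul, ih₁]
      push_cast
      rw [show (n : ℤ) + 2 - 0 = n + 1 - 0 + 1 by ring, zpow_add_one₀ two_ne_zero]
      simp only [Nat.choose_zero_right]
      ring
    · rw [oddChooseSum_add_two_succ]
      push_cast
      rw [ih₁, ih₀]
      push_cast
      rw [show (n : ℤ) + 1 - 2 * (k + 1) = n - 2 * k - 1 by ring,
        show (n : ℤ) + 2 - 2 * (k + 1) = n - 2 * k by ring, zpow_sub_one₀ two_ne_zero,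
        choose_succ_sub_succ]
      push_cast
      ring

lemma evenChooseSum_succ_eq (n k : ℕ) :
    (evenChooseSum (n + 1) k : ℝ) =
      2 ^ ((n : ℤ) - 2 * k) * (2 * (n + 1 - k).choose k - (n - k).choose k) := by
  have h := oddChooseSum_succ (n + 1) k
  have hpow : (2 : ℝ) ^ (((n + 1 : ℕ) : ℤ) - 2 * k) = 2 * 2 ^ ((n : ℤ) - 2 * k) := by
    rw [Nat.cast_succ, add_sub_right_comm, zpow_add_one₀ two_ne_zero, mul_comm]
  rw [← Nat.cast_inj (R := ℝ), Nat.cast_add, oddChooseSum_succ_eq, oddChooseSum_succ_eq, hpow] at h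
  linarith

lemma sum_Icc_choose_mul_choose (n k : ℕ) :
    ∑ j ∈ Icc k (n / 2), n.choose (2 * j) * j.choose k = evenChooseSum n k := by
  refine sum_subset (fun j hj => ?_) (fun j _ hj => ?_)
  · simp only [mem_Icc, mem_range] at hj ⊢
    omega
  · rcases lt_or_ge j k with h | h
    · rw [Nat.choose_eq_zero_of_lt h, mul_zero]
    · rw [Nat.choose_eq_zero_of_lt (by simp only [mem_Icc] at hj; omega), zero_mul]

open Classical in
theorem sum_choose_even_mul_choose (N k : ℕ) (hk : k ≤ (N + 1) / 2) :
    (∑ j ∈ Finset.Icc k ((N + 1) / 2), ((N + 1).choose (2 * j) * j.choose k : ℝ)) =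
        (2 : ℝ) ^ ((N : ℤ) - 2 * k) *
          (2 * ((N + 1 - k).choose k : ℝ) - ((N - k).choose k : ℝ)) ∧
      (∑ j ∈ Finset.Icc k ((N + 1) / 2), ((N + 1).choose (2 * j) * j.choose k : ℝ)) =
        (2 : ℝ) ^ ((N : ℤ) - 2 * k) *
          (((N + 1 - k).choose k : ℝ) +
            (if k = 0 then 0 else ((N - k).choose (k - 1) : ℝ))) := by
  have hsum : (∑ j ∈ Icc k ((N + 1) / 2), ((N + 1).choose (2 * j) * j.choose k : ℝ)) =
      2 ^ ((N : ℤ) - 2 * k) * (2 * ((N + 1 - k).choose k : ℝ) - ((N - k).choose k : ℝ)) := by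
    rw [← evenChooseSum_succ_eq, ← sum_Icc_choose_mul_choose]
    push_cast
    rfl
  refine ⟨hsum, hsum.trans ?_⟩
  congr 1
  rcases k with _ | m
  · norm_num
  · have hsub : N + 1 - (m + 1) = N - (m + 1) + 1 := by omega
    rw [if_neg m.succ_ne_zero, hsub, Nat.choose_succ_succ', Nat.add_sub_cancel]
    push_cast
    ring
end

section
/- Let n ≥ 5 be an integer, let a, b, t be real numbers with a ≠ 0, and define the sequence (u_m) by u₀ = 0, u₁ = (n−2)t, and u_{m+2} = −((n−1)a/(n−2))·u_{m+1} − (nb/(n−2))·u_m for m ≥ 0. Set m₀ = ⌊(n−3)/2⌋ and, for 0 ≤ k ≤ m₀, S_k = (n−1)³·C(n−k−3,k)·a⁴ − [n(n−1)(5n² − (6k+23)n + 10k + 24)/(n−k−3)]·C(n−k−3,k)·a²b + 4n²(n−2)·C(n−k−4,k)·b². Then [ 2nb²·u_{n−3}/(n−2) + ((n−1)a² − 2nb)·u_{n−1}/n + 2ab·u_{n−2} ]·t² = Σ_{k=0}^{m₀} (−1)^{n+k} n^k (n−1)^{n−2k−4} (n−2)^k a^{n−2k−4} b^k S_k · t³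 / ( n (n−2)^{n−3} ). -/
/-!
With `A = -(n-1)a/(n-2)` and `B = -nb/(n-2)` the sequence is `u = (n-2) t · U(A, B)` for the
Lucas sequence `U`, and by homogeneity `U_{m+1}(A, B) = A^m P_m(z)` with `z = B/A²` and
`P_m(z) = U_{m+1}(1, z) = ∑ⱼ C(m-j, j) zʲ`. After factoring out the common power of `A` and
writing `b` through `z`, both sides become combinations of `P_{n-5}, …, P_{n-2}`. On the right
this uses that, for `k ≥ 1`, the coefficient `(5n² - (6k+23)n + 10k + 24)/(n-k-3) · C(n-k-3, k)`
in `S_k` equals `(5n-8) C(n-k-3, k) - (n-2) C(n-k-4, k-1)`, since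
`5n² - (6k+23)n + 10k + 24 = (n-k-3)(5n-k-8) - k(k+1)` and `k C(N, k) = N C(N-1, k-1)`.
The remaining identity needs only `P_{i+2} = P_{i+1} + z P_i`.
-/

open Finset

section LucasSequence

variable {R : Type*} [CommRing R]

def lucasU (A B : R) : ℕ → R
  | 0 => 0
  | 1 => 1
  | m + 2 => A * lucasU A B (m + 1) + B * lucasU A B m

theorem eq_mul_lucasU {A B : R} {u : ℕ → R} (h0 : u 0 = 0)
    (hrec : ∀ m, u (m + 2) = A * u (m + 1) + B * u m) (m : ℕ) :
    u m = u 1 * lucasU A B m := by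
  induction m using Nat.twoStepInduction with
  | zero => simp [h0, lucasU]
  | one => simp [lucasU]
  | more m ih₀ ih₁ => rw [hrec, ih₀, ih₁, lucasU]; ring

theorem lucasU_one_succ_eq_sum_antidiagonal (z : R) (m : ℕ) :
    lucasU 1 z (m + 1) = ∑ p ∈ antidiagonal m, (p.1.choose p.2 : R) * z ^ p.2 := by
  induction m using Nat.twoStepInduction with
  | zero => simp [lucasU]
  | one => simp [lucasU, Nat.antidiagonal_succ]
  | more m ih₀ ih₁ =>
    rw [lucasU, ih₀, ih₁, Nat.antidiagonal_succ_succ', Nat.antidiagonal_succ']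
    simp [Nat.choose_succ_succ, add_mul, sum_add_distrib, mul_sum, mul_left_comm z, ← pow_succ',
      add_comm, add_left_comm]

theorem lucasU_one_succ_eq_sum_range (z : R) {m K : ℕ} (h : m < 2 * K) :
    lucasU 1 z (m + 1) = ∑ j ∈ range K, ((m - j).choose j : R) * z ^ j := by
  have hvan : ∀ j ≥ m / 2 + 1, ((m - j).choose j : R) * z ^ j = 0 := fun j hj => by
    rw [Nat.choose_eq_zero_of_lt (by omega), Nat.cast_zero, zero_mul]
  rw [lucasU_one_succ_eq_sum_antidiagonal, ← Nat.sum_antidiagonal_swap,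
    Nat.sum_antidiagonal_eq_sum_range_succ_mk]
  simp only [Prod.fst_swap, Prod.snd_swap]
  rw [eventually_constant_sum hvan (by omega : m / 2 + 1 ≤ m.succ),
    eventually_constant_sum hvan (by omega : m / 2 + 1 ≤ K)]

theorem lucasU_one_alpha_identity (c z : R) (m : ℕ) :
    2 * (c - 1) * z ^ 2 * lucasU 1 z (m + 2) + (c - 2 + 2 * (c - 1) * z) * lucasU 1 z (m + 4) +
        2 * (c - 2) * z * lucasU 1 z (m + 3) =
      (c - 2) * lucasU 1 z (m + 3) +
        z * ((5 * c - 8) * lucasU 1 z (m + 3) - (c - 2) * z * lucasU 1 z (m + 1)) +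
        4 * (c - 1) * z ^ 2 * lucasU 1 z (m + 2) := by
  have h₄ : lucasU 1 z (m + 4) = lucasU 1 z (m + 3) + z * lucasU 1 z (m + 2) := by
    rw [lucasU, one_mul]
  have h₃ : lucasU 1 z (m + 3) = lucasU 1 z (m + 2) + z * lucasU 1 z (m + 1) := by
    rw [lucasU, one_mul]
  linear_combination (c - 2 + 2 * (c - 1) * z) * h₄ - (c - 2) * z * h₃

theorem lucasU_succ_eq_pow_mul {K : Type*} [Field K] {A : K} (B : K) (hA : A ≠ 0) (m : ℕ) :
    lucasU A B (m + 1) = A ^ m * lucasU 1 (B / A ^ 2) (m + 1) := by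
  induction m using Nat.twoStepInduction with
  | zero => simp [lucasU]
  | one => simp [lucasU]
  | more m ih₀ ih₁ =>
    rw [show m + 2 + 1 = m + 1 + 2 from rfl, lucasU.eq_3 A B (m + 1),
      lucasU.eq_3 1 (B / A ^ 2) (m + 1), ih₀, ih₁]
    field_simp
    ring

theorem eq_mul_pow_mul_lucasU_one {K : Type*} [Field K] {A B : K} (hA : A ≠ 0) {u : ℕ → K}
    (h0 : u 0 = 0) (hrec : ∀ m, u (m + 2) = A * u (m + 1) + B * u m) {i : ℕ} (hi : 1 ≤ i) :
    u i = u 1 * (A ^ (i - 1) * lucasU 1 (B / A ^ 2) i) := by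
  obtain ⟨i, rfl⟩ : ∃ j, i = j + 1 := ⟨i - 1, by omega⟩
  rw [eq_mul_lucasU h0 hrec, lucasU_succ_eq_pow_mul B hA, Nat.add_sub_cancel]

end LucasSequence

noncomputable def alphaS (n k : ℕ) (a b : ℝ) : ℝ :=
  ((n : ℝ) - 1) ^ 3 * ((n - k - 3).choose k : ℝ) * a ^ 4 -
    ((n : ℝ) * ((n : ℝ) - 1) *
        (5 * (n : ℝ) ^ 2 - (6 * (k : ℝ) + 23) * (n : ℝ) + 10 * (k : ℝ) + 24) /
      ((n : ℝ) - (k : ℝ) - 3)) * ((n - k - 3).choose k : ℝ) * a ^ 2 * b +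
    4 * (n : ℝ) ^ 2 * ((n : ℝ) - 2) * ((n - k - 4).choose k : ℝ) * b ^ 2

theorem alpha_summand_eq (n k : ℕ) (hn : 4 ≤ n) {a b : ℝ} (z t : ℝ) (ha : a ≠ 0)
    (hb : b = -(z * ((n : ℝ) - 1) ^ 2 * a ^ 2) / ((n : ℝ) * ((n : ℝ) - 2))) :
    (-1 : ℝ) ^ (n + k) * (n : ℝ) ^ k * ((n : ℝ) - 1) ^ ((n : ℤ) - 2 * k - 4) *
        ((n : ℝ) - 2) ^ k * a ^ ((n : ℤ) - 2 * k - 4) * b ^ k * alphaS n k a b *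
        t ^ 3 / ((n : ℝ) * ((n : ℝ) - 2) ^ (n - 3)) =
      (-1) ^ n * ((n : ℝ) - 1) ^ (n - 1) * a ^ n * t ^ 3 / ((n : ℝ) * ((n : ℝ) - 2) ^ (n - 2)) *
        (z ^ k * (((n : ℝ) - 2) * ((n - k - 3).choose k : ℝ) +
          z * ((5 * (n : ℝ) ^ 2 - (6 * (k : ℝ) + 23) * (n : ℝ) + 10 * (k : ℝ) + 24) /
            ((n : ℝ) - (k : ℝ) - 3) * ((n - k - 3).choose k : ℝ)) +
          4 * ((n : ℝ) - 1) * z ^ 2 * ((n - k - 4).choose k : ℝ))) := by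
  obtain ⟨m, rfl⟩ : ∃ m, n = m + 4 := ⟨n - 4, by omega⟩
  have hexp : ((m + 4 : ℕ) : ℤ) - 2 * k - 4 = (m : ℤ) - (2 * k : ℕ) := by push_cast; ring
  have h4 : (4 : ℝ) ≤ ((m + 4 : ℕ) : ℝ) := by push_cast; linarith [(m.cast_nonneg : (0 : ℝ) ≤ m)]
  have h1 : ((m + 4 : ℕ) : ℝ) - 1 ≠ 0 := by linarith
  have h2 : ((m + 4 : ℕ) : ℝ) - 2 ≠ 0 := by linarith
  have h0 : ((m + 4 : ℕ) : ℝ) ≠ 0 := by linarith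
  rw [hexp, zpow_sub₀ h1, zpow_sub₀ ha, zpow_natCast, zpow_natCast, zpow_natCast, zpow_natCast,
    show m + 4 - 3 = m + 1 from rfl, show m + 4 - 2 = m + 2 from rfl,
    show m + 4 - 1 = m + 3 from rfl, alphaS, hb]
  rw [neg_div, neg_pow (_ / _) k, div_pow, mul_pow, mul_pow, mul_pow, ← pow_mul, ← pow_mul,
    pow_add (-1 : ℝ) (m + 4) k]
  -- `(-1)^(n+k)` and the sign of `b^k` each contribute a factor `(-1)^k`
  rcases neg_one_pow_eq_or ℝ k with hk | hk <;> rw [hk] <;> field_simp <;> ring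

theorem quadratic_div_mul_choose (n k : ℕ) (hk : 1 ≤ k) (h : k + 4 ≤ n) :
    (5 * (n : ℝ) ^ 2 - (6 * (k : ℝ) + 23) * (n : ℝ) + 10 * (k : ℝ) + 24) /
        ((n : ℝ) - (k : ℝ) - 3) * ((n - k - 3).choose k : ℝ) =
      (5 * (n : ℝ) - 8) * ((n - k - 3).choose k : ℝ) -
        ((n : ℝ) - 2) * ((n - k - 4).choose (k - 1) : ℝ) := by
  obtain ⟨j, rfl⟩ : ∃ j, k = j + 1 := ⟨k - 1, by omega⟩
  obtain ⟨N, rfl⟩ : ∃ N, n = N + j + 5 := ⟨n - j - 5, by omega⟩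
  rw [show N + j + 5 - (j + 1) - 3 = N + 1 by omega, show N + j + 5 - (j + 1) - 4 = N by omega,
    Nat.add_sub_cancel]
  have key : ((N + 1 : ℕ) : ℝ) * (N.choose j : ℝ) =
      ((N + 1).choose (j + 1) : ℝ) * ((j + 1 : ℕ) : ℝ) := by
    exact_mod_cast Nat.add_one_mul_choose_eq N j
  push_cast at key ⊢
  rw [show (N : ℝ) + j + 5 - (j + 1) - 3 = N + 1 by ring]
  field_simp
  linear_combination ((N : ℝ) + j + 3) * key

theorem sum_range_quadratic_div_mul_choose (n K : ℕ) (h : K + 4 ≤ n) (z : ℝ) :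
    ∑ k ∈ range (K + 1),
        (5 * (n : ℝ) ^ 2 - (6 * (k : ℝ) + 23) * (n : ℝ) + 10 * (k : ℝ) + 24) /
          ((n : ℝ) - (k : ℝ) - 3) * ((n - k - 3).choose k : ℝ) * z ^ k =
      (5 * (n : ℝ) - 8) * ∑ k ∈ range (K + 1), ((n - k - 3).choose k : ℝ) * z ^ k -
        ((n : ℝ) - 2) * z * ∑ k ∈ range K, ((n - k - 5).choose k : ℝ) * z ^ k := by
  have hsucc : ∀ j ∈ range K,
      (5 * (n : ℝ) ^ 2 - (6 * ((j + 1 : ℕ) : ℝ) + 23) * (n : ℝ) + 10 * ((j + 1 : ℕ) : ℝ) + 24) /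
          ((n : ℝ) - ((j + 1 : ℕ) : ℝ) - 3) * ((n - (j + 1) - 3).choose (j + 1) : ℝ) *
          z ^ (j + 1) =
        (5 * (n : ℝ) - 8) * (((n - (j + 1) - 3).choose (j + 1) : ℝ) * z ^ (j + 1)) -
          ((n : ℝ) - 2) * z * (((n - j - 5).choose j : ℝ) * z ^ j) := fun j hj => by
    rw [mem_range] at hj
    rw [quadratic_div_mul_choose n (j + 1) (by omega) (by omega),
      show n - (j + 1) - 4 = n - j - 5 by omega, Nat.add_sub_cancel]
    ring
  have hn3 : (n : ℝ) - 3 ≠ 0 := by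
    have : (4 : ℝ) ≤ n := by exact_mod_cast (by omega : 4 ≤ n)
    linarith
  rw [sum_range_succ', sum_range_succ' (fun k => ((n - k - 3).choose k : ℝ) * z ^ k),
    sum_congr rfl hsucc, sum_sub_distrib, ← mul_sum, ← mul_sum]
  simp only [Nat.cast_zero, Nat.choose_zero_right, Nat.cast_one, pow_zero, sub_zero]
  field_simp
  ring

theorem sum_alpha_summand_eq (n : ℕ) (hn : 5 ≤ n) {a b : ℝ} (z t : ℝ) (ha : a ≠ 0)
    (hb : b = -(z * ((n : ℝ) - 1) ^ 2 * a ^ 2) / ((n : ℝ) * ((n : ℝ) - 2))) :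
    ∑ k ∈ range ((n - 3) / 2 + 1),
        (-1 : ℝ) ^ (n + k) * (n : ℝ) ^ k * ((n : ℝ) - 1) ^ ((n : ℤ) - 2 * k - 4) *
          ((n : ℝ) - 2) ^ k * a ^ ((n : ℤ) - 2 * k - 4) * b ^ k * alphaS n k a b *
          t ^ 3 / ((n : ℝ) * ((n : ℝ) - 2) ^ (n - 3)) =
      (-1) ^ n * ((n : ℝ) - 1) ^ (n - 1) * a ^ n * t ^ 3 / ((n : ℝ) * ((n : ℝ) - 2) ^ (n - 2)) *
        (((n : ℝ) - 2) * lucasU 1 z (n - 2) +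
          z * ((5 * (n : ℝ) - 8) * lucasU 1 z (n - 2) - ((n : ℝ) - 2) * z * lucasU 1 z (n - 4)) +
          4 * ((n : ℝ) - 1) * z ^ 2 * lucasU 1 z (n - 3)) := by
  obtain ⟨K, hK⟩ : ∃ K, (n - 3) / 2 = K := ⟨_, rfl⟩
  rw [hK, sum_congr rfl fun k _ => alpha_summand_eq n k (by omega) z t ha hb, ← mul_sum]
  congr 1
  have h₂ : lucasU 1 z (n - 2) = ∑ k ∈ range (K + 1), ((n - k - 3).choose k : ℝ) * z ^ k := by
    rw [show n - 2 = n - 3 + 1 by omega, lucasU_one_succ_eq_sum_range z (K := K + 1) (by omega)]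
    exact sum_congr rfl fun k _ => by rw [Nat.sub_right_comm]
  have h₃ : lucasU 1 z (n - 3) = ∑ k ∈ range (K + 1), ((n - k - 4).choose k : ℝ) * z ^ k := by
    rw [show n - 3 = n - 4 + 1 by omega, lucasU_one_succ_eq_sum_range z (K := K + 1) (by omega)]
    exact sum_congr rfl fun k _ => by rw [Nat.sub_right_comm]
  have h₄ : lucasU 1 z (n - 4) = ∑ k ∈ range K, ((n - k - 5).choose k : ℝ) * z ^ k := by
    rw [show n - 4 = n - 5 + 1 by omega, lucasU_one_succ_eq_sum_range z (K := K) (by omega)]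
    exact sum_congr rfl fun k _ => by rw [Nat.sub_right_comm]
  rw [h₂, h₃, h₄, ← sum_range_quadratic_div_mul_choose n K (by omega) z]
  simp only [mul_sum, ← sum_add_distrib]
  exact sum_congr rfl fun k _ => by ring

theorem lucas_seq_alpha_identity (n : ℕ) (hn : 5 ≤ n) (a b t : ℝ) (ha : a ≠ 0)
    (u : ℕ → ℝ) (hu0 : u 0 = 0) (hu1 : u 1 = ((n : ℝ) - 2) * t)
    (hur : ∀ m : ℕ, u (m + 2) =
      -(((n : ℝ) - 1) * a / ((n : ℝ) - 2)) * u (m + 1) - ((n : ℝ) * b / ((n : ℝ) - 2)) * u m) :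
    (2 * (n : ℝ) * b ^ 2 * u (n - 3) / ((n : ℝ) - 2) +
        (((n : ℝ) - 1) * a ^ 2 - 2 * (n : ℝ) * b) * u (n - 1) / (n : ℝ) +
        2 * a * b * u (n - 2)) * t ^ 2 =
      ∑ k ∈ Finset.range ((n - 3) / 2 + 1),
        (-1 : ℝ) ^ (n + k) * (n : ℝ) ^ k * ((n : ℝ) - 1) ^ ((n : ℤ) - 2 * k - 4) *
          ((n : ℝ) - 2) ^ k * a ^ ((n : ℤ) - 2 * k - 4) * b ^ k *
          (((n : ℝ) - 1) ^ 3 * ((n - k - 3).choose k : ℝ) * a ^ 4 -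
            ((n : ℝ) * ((n : ℝ) - 1) *
                (5 * (n : ℝ) ^ 2 - (6 * (k : ℝ) + 23) * (n : ℝ) + 10 * (k : ℝ) + 24) /
              ((n : ℝ) - (k : ℝ) - 3)) * ((n - k - 3).choose k : ℝ) * a ^ 2 * b +
            4 * (n : ℝ) ^ 2 * ((n : ℝ) - 2) * ((n - k - 4).choose k : ℝ) * b ^ 2) *
          t ^ 3 / ((n : ℝ) * ((n : ℝ) - 2) ^ (n - 3)) := by
  have hn' : (5 : ℝ) ≤ n := by exact_mod_cast hn
  have h₀ : (n : ℝ) ≠ 0 := by linarith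
  have h₁ : (n : ℝ) - 1 ≠ 0 := by linarith
  have h₂ : (n : ℝ) - 2 ≠ 0 := by linarith
  set A := -(((n : ℝ) - 1) * a / ((n : ℝ) - 2)) with hA_def
  have hA : A ≠ 0 := neg_ne_zero.mpr (div_ne_zero (mul_ne_zero h₁ ha) h₂)
  have hApow : ∀ i, A ^ i = (-1) ^ i * (((n : ℝ) - 1) ^ i * a ^ i) / ((n : ℝ) - 2) ^ i :=
    fun i => by rw [hA_def, neg_pow, div_pow, mul_pow]; ring
  set z := -((n : ℝ) * b / ((n : ℝ) - 2)) / A ^ 2 with hz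
  have hu : ∀ i, 1 ≤ i → u i = ((n : ℝ) - 2) * t * (A ^ (i - 1) * lucasU 1 z i) := fun i hi => by
    rw [← hu1]
    exact eq_mul_pow_mul_lucasU_one hA hu0 (fun m => by rw [hur, sub_eq_add_neg, ← neg_mul]) hi
  have hb : b = -(z * ((n : ℝ) - 1) ^ 2 * a ^ 2) / ((n : ℝ) * ((n : ℝ) - 2)) := by
    rw [hz, hA_def]
    field_simp
  refine Eq.trans ?_ (sum_alpha_summand_eq n hn z t ha hb).symm
  rw [hu (n - 3) (by omega), hu (n - 1) (by omega), hu (n - 2) (by omega)]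
  obtain ⟨m, rfl⟩ : ∃ m, n = m + 5 := ⟨n - 5, by omega⟩
  simp only [Nat.reduceSubDiff]
  rw [← lucasU_one_alpha_identity _ z m]
  clear_value A z
  subst hb
  simp only [hApow]
  field_simp
  ring
end

section
/- Let n ≥ 5 be an integer and a, b real numbers, and set H = (n−1)²a² − 4n(n−2)b and m₀ = ⌊(n−3)/2⌋. Then Σ_{ℓ=0}^{m₀} C(n−3, 2ℓ)·(−(n−1)a)^{n−2ℓ−3}·H^ℓ = Σ_{k=0}^{m₀} (−1)^{n+k+1}·2^{n−4}·n^k·(n−1)^{n−2k−3}·(n−2)^k·[(n−3)/(n−k−3)]·C(n−k−3, k)·a^{n−2k−3}·b^k. -/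
/-!
With `s ^ 2 = x ^ 2 - 4 * q`, the numbers `u = x + s` and `v = x - s` satisfy `u + v = 2 * x` and
`u * v = 4 * q`, and the sum on the left of the theorem is `(u ^ m + v ^ m) / 2` for `m = n - 3`,
`x = -(n - 1) * a`, `q = n * (n - 2) * b`. Waring's formula expresses `u ^ m + v ^ m` through
`u + v` and `u * v` with coefficients `m / (m - k) * C(m - k, k)`; it follows from
`u ^ (m + 2) + v ^ (m + 2) = (u + v) * (u ^ (m + 1) + v ^ (m + 1)) - u * v * (u ^ m + v ^ m)`.
The square root `s` is taken in an algebraic closure.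
-/

open Finset

theorem add_pow_add_sub_pow {R : Type*} [CommRing R] (m : ℕ) (x s : R) :
    (x + s) ^ m + (x - s) ^ m =
      2 * ∑ l ∈ range (m / 2 + 1), (m.choose (2 * l) : R) * x ^ (m - 2 * l) * (s ^ 2) ^ l := by
  have hbinom : (x + s) ^ m + (x - s) ^ m =
      ∑ j ∈ range (m + 1), (s ^ j + (-s) ^ j) * x ^ (m - j) * (m.choose j : R) := by
    rw [add_comm x, sub_eq_neg_add, add_pow, add_pow, ← sum_add_distrib]
    exact sum_congr rfl fun j _ => by ring
  have hparity : ∀ j ∈ range (m + 1), (s ^ j + (-s) ^ j) * x ^ (m - j) * (m.choose j : R) =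
      if Even j then 2 * (s ^ j * x ^ (m - j) * (m.choose j : R)) else 0 := by
    intro j _
    rcases Nat.even_or_odd j with h | h
    · rw [if_pos h, h.neg_pow]; ring
    · rw [if_neg (Nat.not_even_iff_odd.mpr h), h.neg_pow]; ring
  have hevens : (range (m + 1)).filter Even = (range (m / 2 + 1)).image (2 * ·) := by
    ext j
    simp only [mem_filter, mem_image, mem_range, Nat.even_iff]
    exact ⟨fun ⟨_, _⟩ => ⟨j / 2, by omega, by omega⟩, by rintro ⟨l, _, rfl⟩; omega⟩
  rw [hbinom, sum_congr rfl hparity, ← sum_filter, hevens,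
    sum_image fun _ _ _ _ h => by omega, mul_sum]
  exact sum_congr rfl fun l _ => by rw [pow_mul]; ring

section Waring

variable {K : Type*} [Field K]

-- At `m = 0` this is `0 / 0 = 0`, not the `2` of `u ^ 0 + v ^ 0`: Waring's formula needs `m ≠ 0`.
def waringCoeff (m k : ℕ) : K := (m : K) / ((m : K) - k) * (m - k).choose k

theorem waringCoeff_eq_zero_of_lt {m k : ℕ} (h : m < 2 * k) : (waringCoeff m k : K) = 0 := by
  rw [waringCoeff, Nat.choose_eq_zero_of_lt (by omega), Nat.cast_zero, mul_zero]

theorem waringCoeff_mul_pow_succ (m k : ℕ) (s : K) :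
    waringCoeff m k * s ^ (m + 1 - 2 * k) = waringCoeff m k * s ^ (m - 2 * k) * s := by
  rcases lt_or_ge m (2 * k) with h | h
  · simp [waringCoeff_eq_zero_of_lt h]
  · rw [show m + 1 - 2 * k = m - 2 * k + 1 by omega, pow_succ, mul_assoc]

theorem map_waringCoeff {L : Type*} [Field L] (f : K →+* L) (m k : ℕ) :
    f (waringCoeff m k) = waringCoeff m k := by
  simp [waringCoeff]

variable [CharZero K]

theorem waringCoeff_zero_right {m : ℕ} (hm : m ≠ 0) : (waringCoeff m 0 : K) = 1 := by
  simp [waringCoeff, hm]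

theorem waringCoeff_add_two {m : ℕ} (hm : m ≠ 0) (k : ℕ) :
    (waringCoeff (m + 2) (k + 1) : K) = waringCoeff (m + 1) (k + 1) + waringCoeff m k := by
  rcases lt_or_ge m (2 * k) with h | h
  · simp [waringCoeff_eq_zero_of_lt h,
      waringCoeff_eq_zero_of_lt (show m + 1 < 2 * (k + 1) by omega),
      waringCoeff_eq_zero_of_lt (show m + 2 < 2 * (k + 1) by omega)]
  obtain ⟨r, rfl⟩ : ∃ r, m = 2 * k + r := ⟨m - 2 * k, by omega⟩
  have hk : (k + 1 : K) ≠ 0 := by exact_mod_cast k.succ_ne_zero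
  have hkr : (k + r : K) ≠ 0 := by exact_mod_cast (show k + r ≠ 0 by omega)
  have hkr1 : (k + r + 1 : K) ≠ 0 := by exact_mod_cast (k + r).succ_ne_zero
  have hsucc : ((k + r + 1).choose (k + 1) : K) = (k + r + 1) * (k + r).choose k / (k + 1) := by
    rw [eq_div_iff hk]; exact_mod_cast (Nat.add_one_mul_choose_eq (k + r) k).symm
  have hright : ((k + r).choose (k + 1) : K) = (k + r).choose k * r / (k + 1) := by
    rw [eq_div_iff hk]
    have := Nat.choose_succ_right_eq (k + r) k
    rw [Nat.add_sub_cancel_left] at this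
    exact_mod_cast this
  simp only [waringCoeff, show 2 * k + r + 2 - (k + 1) = k + r + 1 by omega,
    show 2 * k + r + 1 - (k + 1) = k + r by omega, show 2 * k + r - k = k + r by omega,
    hsucc, hright]
  push_cast
  rw [show (2 * k + r + 2 : K) - (k + 1) = k + r + 1 by ring,
    show (2 * k + r + 1 : K) - (k + 1) = k + r by ring, show (2 * k + r : K) - k = k + r by ring]
  field_simp
  ring

theorem pow_add_pow_eq_sum_waringCoeff (u v : K) : ∀ {m N : ℕ}, m ≠ 0 → m < 2 * N →
    u ^ m + v ^ m =
      ∑ k ∈ range N, (-1) ^ k * waringCoeff m k * (u + v) ^ (m - 2 * k) * (u * v) ^ k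
  | 1, N + 1, _, _ => by
    rw [sum_range_succ', sum_eq_zero fun k _ => by rw [waringCoeff_eq_zero_of_lt (by omega)]; ring]
    simp [waringCoeff_zero_right]
  | 2, N + 2, _, _ => by
    rw [sum_range_succ', sum_range_succ',
      sum_eq_zero fun k _ => by rw [waringCoeff_eq_zero_of_lt (by omega)]; ring]
    norm_num [waringCoeff]
    ring
  | m + 3, N + 1, _, hN => by
    have ih₁ := pow_add_pow_eq_sum_waringCoeff u v (m := m + 1) (N := N) (by omega) (by omega)
    have ih₂ := pow_add_pow_eq_sum_waringCoeff u v (m := m + 2) (N := N + 1) (by omega) (by omega)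
    have hrec : u ^ (m + 3) + v ^ (m + 3) =
        (u + v) * (u ^ (m + 2) + v ^ (m + 2)) - u * v * (u ^ (m + 1) + v ^ (m + 1)) := by ring
    rw [hrec, ih₁, ih₂, sum_range_succ', sum_range_succ' _ N, mul_add, mul_sum, mul_sum,
      add_sub_right_comm, ← sum_sub_distrib]
    congr 1
    · refine sum_congr rfl fun k _ => ?_
      rw [waringCoeff_add_two (m := m + 1) (by omega),
        show m + 3 - 2 * (k + 1) = m + 1 - 2 * k by omega]
      have hpow := waringCoeff_mul_pow_succ (K := K) (m + 2) (k + 1) (u + v)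
      rw [show m + 2 + 1 - 2 * (k + 1) = m + 1 - 2 * k by omega] at hpow
      linear_combination (-1) ^ k * (u * v) ^ (k + 1) * hpow
    · simp [waringCoeff_zero_right]
      ring

theorem sum_choose_mul_pow_sub_four_mul {m : ℕ} (hm : m ≠ 0) (x q : K) :
    ∑ l ∈ range (m / 2 + 1), (m.choose (2 * l) : K) * x ^ (m - 2 * l) * (x ^ 2 - 4 * q) ^ l =
      2 ^ (m - 1) *
        ∑ k ∈ range (m / 2 + 1), (-1) ^ k * waringCoeff m k * x ^ (m - 2 * k) * q ^ k := by
  apply mul_left_cancel₀ (two_ne_zero' K)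
  rw [← mul_assoc, ← pow_succ', Nat.sub_add_cancel (by omega)]
  apply (algebraMap K (AlgebraicClosure K)).injective
  obtain ⟨s, hs⟩ :=
    IsAlgClosed.exists_pow_nat_eq (algebraMap K (AlgebraicClosure K) (x ^ 2 - 4 * q)) two_pos
  have hprod : (algebraMap K _ x + s) * (algebraMap K _ x - s) = 4 * algebraMap K _ q := by
    linear_combination (norm := skip) -hs
    simp only [map_sub, map_mul, map_pow, map_ofNat]
    ring
  simp only [map_mul, map_sum, map_pow, map_neg, map_one, map_natCast, map_ofNat, map_waringCoeff,
    ← hs]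
  rw [← add_pow_add_sub_pow, pow_add_pow_eq_sum_waringCoeff _ _ (N := m / 2 + 1) hm (by omega),
    mul_sum]
  refine sum_congr rfl fun k hk => ?_
  have hpow : (2 : AlgebraicClosure K) ^ m = 2 ^ (m - 2 * k) * 4 ^ k := by
    rw [show (4 : AlgebraicClosure K) = 2 ^ 2 by norm_num, ← pow_mul, ← pow_add,
      Nat.sub_add_cancel (by grind)]
  rw [hprod, add_add_sub_cancel, ← two_mul, hpow]
  ring

end Waring

theorem rational_part_expansion (n : ℕ) (hn : 5 ≤ n) (a b : ℝ) :
    ∑ l ∈ Finset.range ((n - 3) / 2 + 1),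
        ((n - 3).choose (2 * l) : ℝ) * (-((n : ℝ) - 1) * a) ^ (n - 2 * l - 3) *
          (((n : ℝ) - 1) ^ 2 * a ^ 2 - 4 * (n : ℝ) * ((n : ℝ) - 2) * b) ^ l =
      ∑ k ∈ Finset.range ((n - 3) / 2 + 1),
        (-1 : ℝ) ^ (n + k + 1) * 2 ^ (n - 4) * (n : ℝ) ^ k * ((n : ℝ) - 1) ^ (n - 2 * k - 3) *
          ((n : ℝ) - 2) ^ k * (((n : ℝ) - 3) / ((n : ℝ) - (k : ℝ) - 3)) *
          ((n - k - 3).choose k : ℝ) * a ^ (n - 2 * k - 3) * b ^ k := by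
  obtain ⟨m, rfl⟩ : ∃ m, n = m + 3 := ⟨n - 3, by omega⟩
  rw [show ((m + 3 : ℕ) - 1 : ℝ) ^ 2 * a ^ 2 - 4 * (m + 3 : ℕ) * ((m + 3 : ℕ) - 2) * b =
    (-((m + 3 : ℕ) - 1) * a) ^ 2 - 4 * ((m + 3 : ℕ) * ((m + 3 : ℕ) - 2) * b) by ring]
  simp only [Nat.add_sub_cancel, Nat.sub_sub, Nat.add_sub_add_right]
  rw [sum_choose_mul_pow_sub_four_mul (by omega), mul_sum]
  refine sum_congr rfl fun k hk => ?_
  obtain ⟨j, hj⟩ : ∃ j, m = 2 * k + j := ⟨m - 2 * k, by grind⟩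
  have hsign : (-1 : ℝ) ^ (m + 3 + k + 1) = (-1) ^ k * (-1) ^ j := by
    rw [hj, show 2 * k + j + 3 + k + 1 = k + j + 2 * (k + 2) by ring, pow_add, pow_add, pow_mul]
    norm_num
  rw [hsign, waringCoeff, show m - 2 * k = j by omega, show m - k = k + j by omega,
    show m + 3 - 4 = m - 1 by omega, mul_pow, neg_pow (((m + 3 : ℕ) : ℝ) - 1), mul_pow, mul_pow]
  push_cast
  ring
end

section
/- Let n ≥ 5 be an integer and a, b real numbers, and set H = (n−1)²a² − 4n(n−2)b and m₀ = ⌊(n−3)/2⌋. Then Σ_{ℓ=0}^{m₀} C(n−3, 2ℓ+1)·(−(n−1)a)^{n−2ℓ−4}·H^ℓ = Σ_{k=0}^{m₀} (−1)^{n+k}·2^{n−4}·n^k·(n−1)^{n−2k−4}·(n−2)^k·C(n−k−4, k)·a^{n−2k−4}·b^k. -/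
/-!
Write `J_m(p, q)` for the `√q`-part of `(p + √q)^m`, so that the left-hand side is
`J_{n-3}(p, p² - 4c)` with `p = -(n-1)a`, `c = n(n-2)b`. Since `p ± √q` are the roots of
`x² - 2px + (p² - q)`, the sequence `J_m` obeys `J_{m+2} = 2p J_{m+1} - (p² - q) J_m`; for
`q = p² - 4c` this says that `J_{r+1} / 2^r` obeys the recurrence `E_{r+2} = p E_{r+1} - c E_r`
of the Dickson polynomials of the second kind, whose explicit form
`E_r(p, c) = ∑ₖ C(r-k, k) p^(r-2k) (-c)^k` is the right-hand side.
-/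

open Finset Polynomial

theorem cast_choose_mul_pow_congr {R : Type*} [Semiring R] {n k i j : ℕ} (x : R)
    (h : k ≤ n → i = j) : (n.choose k : R) * x ^ i = n.choose k * x ^ j := by
  rcases le_or_gt k n with hk | hk
  · rw [h hk]
  · simp [Nat.choose_eq_zero_of_lt hk]

theorem cast_choose_mul_zpow_congr {K : Type*} [DivisionRing K] {n k i : ℕ} {e : ℤ} (x : K)
    (h : k ≤ n → e = i) : (n.choose k : K) * x ^ e = n.choose k * x ^ i := by
  rcases le_or_gt k n with hk | hk
  · rw [h hk, zpow_natCast]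
  · simp [Nat.choose_eq_zero_of_lt hk]

theorem neg_one_pow_sub_two_mul {M : Type*} [Monoid M] [HasDistribNeg M] {r k : ℕ}
    (hk : 2 * k ≤ r) : (-1 : M) ^ (r - 2 * k) = (-1) ^ r := by
  obtain ⟨s, rfl⟩ := Nat.exists_eq_add_of_le hk
  simp [pow_add, pow_mul]

section
variable {R : Type*} [CommRing R]

theorem sum_choose_sub_add_two (x y : R) (r : ℕ) :
    ∑ k ∈ range (r + 3), ((r + 2 - k).choose k : R) * x ^ (r + 2 - 2 * k) * y ^ k =
      x * ∑ k ∈ range (r + 2), ((r + 1 - k).choose k : R) * x ^ (r + 1 - 2 * k) * y ^ k +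
        y * ∑ k ∈ range (r + 1), ((r - k).choose k : R) * x ^ (r - 2 * k) * y ^ k := by
  have h₂ : ∑ k ∈ range (r + 3), ((r + 2 - k).choose k : R) * x ^ (r + 2 - 2 * k) * y ^ k =
      x ^ (r + 2) + ∑ k ∈ range (r + 1),
        (((r - k).choose k : R) + (r - k).choose (k + 1)) * x ^ (r - 2 * k) * y ^ (k + 1) := by
    rw [sum_range_succ', sum_range_succ, add_comm]
    simp only [Nat.sub_self, Nat.choose_zero_succ, Nat.cast_zero, zero_mul, add_zero,
      Nat.choose_zero_right, Nat.cast_one, Nat.sub_zero, mul_zero, pow_zero, mul_one, one_mul]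
    refine congrArg _ (sum_congr rfl fun k hk => ?_)
    rw [mem_range] at hk
    rw [show r + 2 - (k + 1) = r - k + 1 by omega, Nat.choose_succ_succ', Nat.cast_add,
      show r + 2 - 2 * (k + 1) = r - 2 * k by omega]
  have h₁ : ∑ k ∈ range (r + 2), ((r + 1 - k).choose k : R) * x ^ (r + 1 - 2 * k) * y ^ k =
      x ^ (r + 1) + ∑ k ∈ range (r + 1),
        ((r - k).choose (k + 1) : R) * x ^ (r - 1 - 2 * k) * y ^ (k + 1) := by
    rw [sum_range_succ', add_comm]
    simp only [Nat.choose_zero_right, Nat.cast_one, Nat.sub_zero, mul_zero, pow_zero, mul_one,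
      one_mul]
    refine congrArg _ (sum_congr rfl fun k _ => ?_)
    rw [show r + 1 - (k + 1) = r - k by omega, show r + 1 - 2 * (k + 1) = r - 1 - 2 * k by omega]
  rw [h₂, h₁, mul_add, ← pow_succ', add_assoc, mul_sum, mul_sum, ← sum_add_distrib]
  refine congrArg _ (sum_congr rfl fun k _ => ?_)
  rw [add_mul, add_mul, cast_choose_mul_pow_congr x (n := r - k) (k := k + 1) (i := r - 2 * k)
    (j := r - 1 - 2 * k + 1) (by omega), pow_succ]
  ring

theorem dickson_two_eval_eq_sum (a x : R) (r : ℕ) :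
    (dickson 2 a r).eval x =
      ∑ k ∈ range (r + 1), ((r - k).choose k : R) * x ^ (r - 2 * k) * (-a) ^ k := by
  induction r using Nat.twoStepInduction with
  | zero => norm_num [dickson_zero]
  | one => simp [sum_range_succ]
  | more r ih₀ ih₁ =>
    rw [dickson_add_two, eval_sub, eval_mul, eval_X, eval_mul, eval_C, ih₀, ih₁,
      sum_choose_sub_add_two]
    ring

/-- `(p + √q)^m = ratPart p q m + sqrtPart p q m * √q`. -/
def sqrtPart (p q : R) (m : ℕ) : R :=
  ∑ l ∈ range m, (m.choose (2 * l + 1) : R) * p ^ (m - 1 - 2 * l) * q ^ l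

def ratPart (p q : R) (m : ℕ) : R :=
  ∑ l ∈ range (m + 1), (m.choose (2 * l) : R) * p ^ (m - 2 * l) * q ^ l

theorem sqrtPart_succ (p q : R) (m : ℕ) :
    sqrtPart p q (m + 1) = ratPart p q m + p * sqrtPart p q m := by
  simp only [sqrtPart, ratPart, Nat.choose_succ_succ', Nat.cast_add, add_mul, sum_add_distrib,
    Nat.add_sub_cancel]
  congr 1
  rw [sum_range_succ _ m, Nat.choose_eq_zero_of_lt (by omega : m < 2 * m + 1), Nat.cast_zero,
    zero_mul, zero_mul, add_zero, mul_sum]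
  refine sum_congr rfl fun l _ => ?_
  rw [cast_choose_mul_pow_congr p (i := m - 2 * l) (j := m - 1 - 2 * l + 1) (by omega),
    pow_succ]
  ring

theorem ratPart_succ (p q : R) (m : ℕ) :
    ratPart p q (m + 1) = p * ratPart p q m + q * sqrtPart p q m := by
  have h₁ : ratPart p q (m + 1) = p ^ (m + 1) + ∑ l ∈ range m,
      ((m.choose (2 * l + 1) : R) + m.choose (2 * l + 2)) * p ^ (m - 1 - 2 * l) * q ^ (l + 1) := by
    rw [ratPart, sum_range_succ', sum_range_succ, add_comm]
    simp only [Nat.choose_zero_right, Nat.cast_one, mul_zero, Nat.sub_zero, pow_zero, mul_one,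
      one_mul, show 2 * (m + 1) = 2 * m + 1 + 1 by ring, Nat.choose_succ_succ',
      Nat.choose_eq_zero_of_lt (by omega : m < 2 * m + 1),
      Nat.choose_eq_zero_of_lt (by omega : m < 2 * m + 1 + 1), Nat.cast_zero, add_zero, zero_mul]
    refine congrArg _ (sum_congr rfl fun l _ => ?_)
    rw [show 2 * (l + 1) = 2 * l + 1 + 1 by ring, Nat.choose_succ_succ', Nat.cast_add,
      show m + 1 - (2 * l + 1 + 1) = m - 1 - 2 * l by omega]
  have h₀ : ratPart p q m = p ^ m + ∑ l ∈ range m,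
      (m.choose (2 * l + 2) : R) * p ^ (m - 2 - 2 * l) * q ^ (l + 1) := by
    rw [ratPart, sum_range_succ', add_comm]
    simp only [Nat.choose_zero_right, Nat.cast_one, mul_zero, Nat.sub_zero, pow_zero, mul_one,
      one_mul]
    refine congrArg _ (sum_congr rfl fun l _ => ?_)
    rw [show 2 * (l + 1) = 2 * l + 2 by ring, show m - (2 * l + 2) = m - 2 - 2 * l by omega]
  rw [h₁, h₀, sqrtPart, mul_add, ← pow_succ', add_assoc, mul_sum, mul_sum, ← sum_add_distrib]
  refine congrArg _ (sum_congr rfl fun l _ => ?_)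
  rw [add_mul, add_mul, cast_choose_mul_pow_congr p (n := m) (k := 2 * l + 2) (i := m - 1 - 2 * l)
    (j := m - 2 - 2 * l + 1) (by omega), pow_succ]
  ring

theorem sqrtPart_add_two (p q : R) (m : ℕ) :
    sqrtPart p q (m + 2) = 2 * p * sqrtPart p q (m + 1) - (p ^ 2 - q) * sqrtPart p q m := by
  linear_combination sqrtPart_succ p q (m + 1) + ratPart_succ p q m - p * sqrtPart_succ p q m

theorem sqrtPart_sq_sub_four_mul (p a : R) (r : ℕ) :
    sqrtPart p (p ^ 2 - 4 * a) (r + 1) = 2 ^ r * (dickson 2 a r).eval p := by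
  induction r using Nat.twoStepInduction with
  | zero => norm_num [sqrtPart, dickson_zero]
  | one => simp [sqrtPart, sum_range_succ]
  | more r ih₀ ih₁ =>
    rw [sqrtPart_add_two, ih₀, ih₁, dickson_add_two, eval_sub, eval_mul, eval_X, eval_mul, eval_C]
    ring

end

theorem sqrt_part_expansion (n : ℕ) (hn : 5 ≤ n) (a b : ℝ) :
    ∑ l ∈ Finset.range ((n - 3) / 2 + 1),
        ((n - 3).choose (2 * l + 1) : ℝ) * (-((n : ℝ) - 1) * a) ^ ((n : ℤ) - 2 * l - 4) *
          (((n : ℝ) - 1) ^ 2 * a ^ 2 - 4 * (n : ℝ) * ((n : ℝ) - 2) * b) ^ l =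
      ∑ k ∈ Finset.range ((n - 3) / 2 + 1),
        (-1 : ℝ) ^ (n + k) * 2 ^ (n - 4) * (n : ℝ) ^ k *
          ((n : ℝ) - 1) ^ ((n : ℤ) - 2 * k - 4) * ((n : ℝ) - 2) ^ k *
          ((n - k - 4).choose k : ℝ) * a ^ ((n : ℤ) - 2 * k - 4) * b ^ k := by
  obtain ⟨r, rfl⟩ : ∃ r, n = r + 4 := ⟨n - 4, by omega⟩
  set p : ℝ := -((↑(r + 4) : ℝ) - 1) * a
  set c : ℝ := (↑(r + 4) : ℝ) * ((↑(r + 4) : ℝ) - 2) * b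
  simp only [show r + 4 - 3 = r + 1 by omega, show r + 4 - 4 = r by omega,
    show ∀ k, r + 4 - k - 4 = r - k by omega]
  trans sqrtPart p (p ^ 2 - 4 * c) (r + 1)
  · rw [sqrtPart, eventually_constant_sum (n := r + 1) (N := (r + 1) / 2 + 1) ?_ (by omega)]
    · refine sum_congr rfl fun l _ => ?_
      rw [cast_choose_mul_zpow_congr (i := r + 1 - 1 - 2 * l) _ (by push_cast; omega)]
      ring
    · exact fun l hl => by simp [Nat.choose_eq_zero_of_lt (show r + 1 < 2 * l + 1 by omega)]
  rw [sqrtPart_sq_sub_four_mul, dickson_two_eval_eq_sum, mul_sum,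
    eventually_constant_sum (n := r + 1) (N := (r + 1) / 2 + 1) ?_ (by omega)]
  · refine sum_congr rfl fun k _ => ?_
    rcases le_or_gt k (r - k) with hk | hk
    · have he : ((r + 4 : ℕ) : ℤ) - 2 * k - 4 = ((r - 2 * k : ℕ) : ℤ) := by push_cast; omega
      simp only [p, c, he, zpow_natCast, neg_mul, neg_pow (_ * _ : ℝ), mul_pow, pow_add,
        neg_one_pow_sub_two_mul (by omega : 2 * k ≤ r)]
      ring
    · simp [Nat.choose_eq_zero_of_lt hk]
  · exact fun k hk => by simp [Nat.choose_eq_zero_of_lt (show r - k < k by omega)]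
end

section
/- Let n ≥ 5 be an integer and a, b real numbers. Set m₀ = ⌊(n−3)/2⌋, H = (n−1)²a² − 4n(n−2)b, F = (n−1)²a³ − 2n(2n−3)ab, G = (n−1)a² − 2nb, I = Σ_{ℓ=0}^{m₀} C(n−3, 2ℓ)·(−(n−1)a)^{n−2ℓ−3}·H^ℓ, J = Σ_{ℓ=0}^{m₀} C(n−3, 2ℓ+1)·(−(n−1)a)^{n−2ℓ−4}·H^ℓ, and for 0 ≤ k ≤ m₀ let S_k = (n−1)³·C(n−k−3,k)·a⁴ − [n(n−1)(5n² − (6k+23)n + 10k + 24)/(n−k−3)]·C(n−k−3,k)·a²b + 4n²(n−2)·C(n−k−4,k)·b². Then −F·I + G·H·J = Σ_{k=0}^{m₀} (−1)^{n+k}·2^{n−3}·n^k·(n−1)^{n−2k−4}·(n−2)^k·a^{n−2k−4}·b^k·S_k. -/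
/-!
Put `s = -(n-1)a` and `p = n(n-2)b`, so that `H = s² - 4p`, and let `Eⱼ = Eⱼ(s, p)` be the
Dickson polynomials of the second kind, `(dickson 2 p j).eval s`
(`E₀ = 1`, `E₁ = s`, `Eⱼ₊₂ = s Eⱼ₊₁ - p Eⱼ`).
Over `ℂ` write `s = u + v`, `p = u v`. Splitting `(s ± (u - v))ᵐ = (2u)ᵐ, (2v)ᵐ` into even
and odd binomial parts gives `I = 2^(n-4) (u^(n-3) + v^(n-3)) = 2^(n-4) (E_{n-3} - p E_{n-5})`
and `H J = 2^(n-4) H E_{n-4}`, since `(u - v) Eⱼ = u^(j+1) - v^(j+1)`.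
On the other side `Eⱼ = ∑ₖ C(j-k, k) (-p)ᵏ s^(j-2k)`; writing
`5n² - (6k+23)n + 10k + 24 = (5n-8)(n-k-3) - (n-2)k` and using
`k C(n-k-3, k) = (n-k-3) C(n-k-4, k-1)`, the right-hand side becomes a combination of
`E_{n-3}`, `E_{n-4}`, `E_{n-5}`, and the identity reduces to the recurrence
`E_{n-3} = s E_{n-4} - p E_{n-5}`.
-/

open Finset Polynomial

namespace Polynomial

variable {R : Type*} [CommRing R]

theorem dickson_one_mul_eval_add (u v : R) :
    ∀ m, (dickson 1 (u * v) m).eval (u + v) = u ^ m + v ^ m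
  | 0 => by norm_num
  | 1 => by simp
  | m + 2 => by
    simp only [dickson_add_two, eval_sub, eval_mul, eval_X, eval_C,
      dickson_one_mul_eval_add u v m, dickson_one_mul_eval_add u v (m + 1)]
    ring

theorem dickson_two_mul_eval_add_mul_sub (u v : R) :
    ∀ m, (dickson 2 (u * v) m).eval (u + v) * (u - v) = u ^ (m + 1) - v ^ (m + 1)
  | 0 => by norm_num
  | 1 => by simp; ring
  | m + 2 => by
    simp only [dickson_add_two, eval_sub, eval_mul, eval_X, eval_C]
    linear_combination (u + v) * dickson_two_mul_eval_add_mul_sub u v (m + 1) -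
      u * v * dickson_two_mul_eval_add_mul_sub u v m

theorem dickson_one_eq_dickson_two_sub (a : R) :
    ∀ m, dickson 1 a (m + 2) = dickson 2 a (m + 2) - C a * dickson 2 a m
  | 0 => by simp; ring
  | 1 => by simp; ring
  | m + 2 => by
    rw [dickson_add_two, dickson_one_eq_dickson_two_sub a m,
      dickson_one_eq_dickson_two_sub a (m + 1), dickson_add_two 2 a (m + 2), dickson_add_two 2 a m]
    ring

theorem dickson_two_eval_eq_sum_choose (s p : R) :
    ∀ m N, m < 2 * N → (dickson 2 p m).eval s =
      ∑ k ∈ range N, ((m - k).choose k : R) * (-p) ^ k * s ^ (m - 2 * k)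
  | 0, N + 1, _ => by
    rw [sum_range_succ']
    norm_num
  | 1, N + 1, _ => by
    rw [sum_range_succ']
    simp
  | m + 2, N + 1, hN => by
    have pascal (k : ℕ) : ((m + 2 - (k + 1)).choose (k + 1) : R) * (-p) ^ (k + 1) *
        s ^ (m + 2 - 2 * (k + 1)) =
        s * (((m + 1 - (k + 1)).choose (k + 1) : R) * (-p) ^ (k + 1) *
          s ^ (m + 1 - 2 * (k + 1))) -
        p * (((m - k).choose k : R) * (-p) ^ k * s ^ (m - 2 * k)) := by
      rcases le_or_gt k m with hk | hk
      · rw [show m + 2 - (k + 1) = m - k + 1 by omega, show m + 1 - (k + 1) = m - k by omega,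
          show m + 2 - 2 * (k + 1) = m - 2 * k by omega, Nat.choose_succ_succ', Nat.cast_add]
        rcases le_or_gt (2 * k + 1) m with h | h
        · rw [show m - 2 * k = m + 1 - 2 * (k + 1) + 1 by omega]
          ring
        · rw [Nat.choose_eq_zero_of_lt (by omega : m - k < k + 1)]
          ring
      · rw [Nat.choose_eq_zero_of_lt (by omega : m + 2 - (k + 1) < k + 1),
          Nat.choose_eq_zero_of_lt (by omega : m + 1 - (k + 1) < k + 1),
          Nat.choose_eq_zero_of_lt (by omega : m - k < k)]
        ring
    rw [dickson_add_two, eval_sub, eval_mul, eval_mul, eval_X, eval_C,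
      dickson_two_eval_eq_sum_choose s p m N (by omega),
      dickson_two_eval_eq_sum_choose s p (m + 1) (N + 1) (by omega), sum_range_succ' _ N,
      sum_range_succ' _ N, mul_add, mul_sum, mul_sum, ← sub_add_eq_add_sub, ← sum_sub_distrib]
    simp only [pascal]
    simp [pow_succ']

end Polynomial

theorem IsAlgClosed.exists_add_eq_and_mul_eq {K : Type*} [Field K] [IsAlgClosed K]
    (s p : K) : ∃ u v, u + v = s ∧ u * v = p := by
  obtain ⟨u, hu⟩ := IsAlgClosed.exists_root (C 1 * X ^ 2 + C (-s) * X + C p)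
    (by rw [degree_quadratic one_ne_zero]; decide)
  refine ⟨u, s - u, by ring, ?_⟩
  simp only [IsRoot, eval_add, eval_mul, eval_C, eval_pow, eval_X] at hu
  linear_combination -hu

theorem zpow_natCast_sub_one_mul {K : Type*} [DivisionRing K] (x A B : K) (j : ℕ)
    (hB : j = 0 → B = 0) :
    x ^ ((j : ℤ) - 1) * (x ^ 2 * A + B) = x ^ (j + 1) * A + x ^ (j - 1) * B := by
  have hsq : x ^ ((j : ℤ) - 1) * x ^ 2 = x ^ (j + 1) := by
    rw [← zpow_natCast x 2, ← zpow_add' (Or.inr (Or.inl (by omega))), ← zpow_natCast]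
    congr 1
    push_cast
    ring
  rcases j with _ | j
  · rw [hB rfl, add_zero, mul_zero, add_zero, ← mul_assoc, hsq]
  · rw [mul_add, ← mul_assoc, hsq, Nat.add_sub_cancel, Nat.cast_succ, add_sub_cancel_right,
      zpow_natCast]

theorem sum_range_two_mul {M : Type*} [AddCommMonoid M] (f : ℕ → M) (N : ℕ) :
    ∑ j ∈ range (2 * N), f j = ∑ l ∈ range N, (f (2 * l) + f (2 * l + 1)) := by
  induction N with
  | zero => simp
  | succ N ih =>
    rw [mul_add, mul_one, sum_range_succ, sum_range_succ, sum_range_succ, ih, add_assoc]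

section Binomial

variable {R : Type*} [CommRing R]

theorem add_pow_eq_sum_even_add_mul_sum_odd (s w : R) (m : ℕ) :
    (s + w) ^ m =
      ∑ l ∈ range (m / 2 + 1), (m.choose (2 * l) : R) * s ^ (m - 2 * l) * (w ^ 2) ^ l +
      w * ∑ l ∈ range (m / 2 + 1),
        (m.choose (2 * l + 1) : R) * s ^ (m - (2 * l + 1)) * (w ^ 2) ^ l := by
  have hrange : range (m + 1) ⊆ range (2 * (m / 2 + 1)) := range_subset_range.2 (by omega)
  rw [add_comm, add_pow, sum_subset hrange fun j _ hj => by
      rw [Nat.choose_eq_zero_of_lt (by simpa using hj), Nat.cast_zero, mul_zero],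
    sum_range_two_mul, sum_add_distrib, mul_sum]
  congr 1 <;> refine sum_congr rfl fun l _ => ?_ <;> ring

theorem two_mul_sum_even_choose (u v : R) (m : ℕ) :
    2 * ∑ l ∈ range (m / 2 + 1), (m.choose (2 * l) : R) * (u + v) ^ (m - 2 * l) *
      ((u - v) ^ 2) ^ l = 2 ^ m * (u ^ m + v ^ m) := by
  have hu := add_pow_eq_sum_even_add_mul_sum_odd (u + v) (u - v) m
  have hv := add_pow_eq_sum_even_add_mul_sum_odd (u + v) (-(u - v)) m
  rw [show u + v + (u - v) = 2 * u by ring, mul_pow] at hu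
  rw [neg_sq, show u + v + -(u - v) = 2 * v by ring, mul_pow] at hv
  linear_combination -hu - hv

theorem two_mul_sub_mul_sum_odd_choose (u v : R) (m : ℕ) :
    2 * (u - v) * ∑ l ∈ range (m / 2 + 1), (m.choose (2 * l + 1) : R) *
      (u + v) ^ (m - (2 * l + 1)) * ((u - v) ^ 2) ^ l = 2 ^ m * (u ^ m - v ^ m) := by
  have hu := add_pow_eq_sum_even_add_mul_sum_odd (u + v) (u - v) m
  have hv := add_pow_eq_sum_even_add_mul_sum_odd (u + v) (-(u - v)) m
  rw [show u + v + (u - v) = 2 * u by ring, mul_pow] at hu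
  rw [neg_sq, show u + v + -(u - v) = 2 * v by ring, mul_pow] at hv
  linear_combination -hu + hv

theorem two_mul_sum_even_choose_eq_dickson (u v : R) (n : ℕ) (hn : 5 ≤ n) :
    2 * ∑ l ∈ range ((n - 3) / 2 + 1),
      ((n - 3).choose (2 * l) : R) * (u + v) ^ (n - 2 * l - 3) * ((u + v) ^ 2 - 4 * (u * v)) ^ l =
      2 ^ (n - 3) * ((dickson 2 (u * v) (n - 3)).eval (u + v) -
        u * v * (dickson 2 (u * v) (n - 5)).eval (u + v)) := by
  simp only [show (u + v) ^ 2 - 4 * (u * v) = (u - v) ^ 2 by ring,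
    show ∀ l, n - 2 * l - 3 = n - 3 - 2 * l from fun l => by omega]
  rw [two_mul_sum_even_choose, ← dickson_one_mul_eval_add, show n - 3 = n - 5 + 2 by omega,
    dickson_one_eq_dickson_two_sub, eval_sub, eval_mul, eval_C]

end Binomial

/-- Multiplying by `H = (u - v)²` avoids dividing by `u - v`. -/
theorem two_mul_mul_sum_odd_choose_eq_dickson {K : Type*} [Field K] (u v : K) (n : ℕ)
    (hn : 4 ≤ n) :
    2 * (((u + v) ^ 2 - 4 * (u * v)) * ∑ l ∈ range ((n - 3) / 2 + 1),
      ((n - 3).choose (2 * l + 1) : K) * (u + v) ^ ((n : ℤ) - 2 * l - 4) *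
        ((u + v) ^ 2 - 4 * (u * v)) ^ l) =
      2 ^ (n - 3) * ((u + v) ^ 2 - 4 * (u * v)) * (dickson 2 (u * v) (n - 4)).eval (u + v) := by
  have hzpow (l : ℕ) : ((n - 3).choose (2 * l + 1) : K) * (u + v) ^ ((n : ℤ) - 2 * l - 4) =
      ((n - 3).choose (2 * l + 1) : K) * (u + v) ^ (n - 3 - (2 * l + 1)) := by
    rcases le_or_gt (2 * l + 1) (n - 3) with h | h
    · rw [← zpow_natCast, Nat.cast_sub h, Nat.cast_sub (by omega)]
      congr 2
      push_cast
      ring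
    · rw [Nat.choose_eq_zero_of_lt h, Nat.cast_zero, zero_mul, zero_mul]
  simp only [hzpow, show (u + v) ^ 2 - 4 * (u * v) = (u - v) ^ 2 by ring]
  have hodd := two_mul_sub_mul_sum_odd_choose u v (n - 3)
  rw [show n - 3 = n - 4 + 1 by omega, ← dickson_two_mul_eval_add_mul_sub] at hodd
  rw [show n - 3 = n - 4 + 1 by omega]
  linear_combination (u - v) * hodd

section RightHandSide

variable {K : Type*} [Field K] [CharZero K]

theorem sum_mul_choose_div_eq_neg_mul_dickson (s p : K) (n : ℕ) (hn : 5 ≤ n) :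
    ∑ k ∈ range ((n - 3) / 2 + 1),
      (k : K) * ((n - 3 - k).choose k : K) / ((n : K) - k - 3) * (-p) ^ k * s ^ (n - 3 - 2 * k) =
      -p * (dickson 2 p (n - 5)).eval s := by
  rw [sum_range_succ', Nat.cast_zero, zero_mul, zero_div, zero_mul, zero_mul, add_zero,
    dickson_two_eval_eq_sum_choose s p (n - 5) ((n - 3) / 2) (by omega), mul_sum]
  refine sum_congr rfl fun k hk => ?_
  have hk := mem_range.1 hk
  have hd : ((n - 3 - (k + 1) : ℕ) : K) = (n : K) - (k + 1 : ℕ) - 3 := by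
    rw [Nat.cast_sub (by omega), Nat.cast_sub (by omega)]
    push_cast
    ring
  have hchoose : ((k + 1 : ℕ) : K) * ((n - 3 - (k + 1)).choose (k + 1) : K) =
      ((n : K) - (k + 1 : ℕ) - 3) * ((n - 5 - k).choose k : K) := by
    rw [← hd, show n - 3 - (k + 1) = n - 5 - k + 1 by omega]
    exact_mod_cast (mul_comm _ _).trans (Nat.add_one_mul_choose_eq (n - 5 - k) k).symm
  have hne : (n : K) - (k + 1 : ℕ) - 3 ≠ 0 := by
    rw [← hd]
    exact_mod_cast (by omega : n - 3 - (k + 1) ≠ 0)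
  rw [hchoose, mul_div_cancel_left₀ _ hne, show n - 3 - 2 * (k + 1) = n - 5 - 2 * k by omega,
    pow_succ]
  ring

theorem rhs_summand_eq (n k : ℕ) (hn : 4 ≤ n) (hk : 2 * k + 3 ≤ n) (a b : K) :
    (-1 : K) ^ (n + k) * 2 ^ (n - 3) * (n : K) ^ k *
        ((n : K) - 1) ^ ((n : ℤ) - 2 * k - 4) * ((n : K) - 2) ^ k *
        a ^ ((n : ℤ) - 2 * k - 4) * b ^ k *
        (((n : K) - 1) ^ 3 * ((n - k - 3).choose k : K) * a ^ 4 -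
          ((n : K) * ((n : K) - 1) *
              (5 * (n : K) ^ 2 - (6 * (k : K) + 23) * (n : K) + 10 * (k : K) + 24) /
            ((n : K) - (k : K) - 3)) * ((n - k - 3).choose k : K) * a ^ 2 * b +
          4 * (n : K) ^ 2 * ((n : K) - 2) * ((n - k - 4).choose k : K) * b ^ 2) =
      2 ^ (n - 3) *
        ((-((n : K) - 1) ^ 2 * a ^ 3 + (n : K) * (5 * (n : K) - 8) * a * b) *
            (((n - 3 - k).choose k : K) * (-((n : K) * ((n : K) - 2) * b)) ^ k *
              (-((n : K) - 1) * a) ^ (n - 3 - 2 * k)) -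
          (n : K) * ((n : K) - 2) * a * b *
            ((k : K) * ((n - 3 - k).choose k : K) / ((n : K) - k - 3) *
              (-((n : K) * ((n : K) - 2) * b)) ^ k * (-((n : K) - 1) * a) ^ (n - 3 - 2 * k)) +
          4 * (n : K) ^ 2 * ((n : K) - 2) * b ^ 2 *
            (((n - 4 - k).choose k : K) * (-((n : K) * ((n : K) - 2) * b)) ^ k *
              (-((n : K) - 1) * a) ^ (n - 4 - 2 * k))) := by
  obtain ⟨j, hj⟩ : ∃ j, n = j + 2 * k + 3 := ⟨n - 2 * k - 3, by omega⟩
  have hn1 : (n : K) - 1 ≠ 0 := sub_ne_zero.2 (by exact_mod_cast (by omega : n ≠ 1))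
  have hnk : (n : K) - k - 3 ≠ 0 := by
    rw [sub_sub]
    exact sub_ne_zero.2 (by exact_mod_cast (by omega : n ≠ k + 3))
  have hC' : j = 0 → ((n - 4 - k).choose k : K) = 0 := fun h => by
    rw [Nat.choose_eq_zero_of_lt (by omega), Nat.cast_zero]
  rw [Nat.sub_right_comm n k 3, Nat.sub_right_comm n k 4,
    show (n : ℤ) - 2 * k - 4 = (j : ℤ) - 1 by omega, show n - 3 - 2 * k = j by omega,
    show n - 4 - 2 * k = j - 1 by omega,
    show (-((n : K) * ((n : K) - 2) * b)) ^ k =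
      (-1) ^ k * (n : K) ^ k * ((n : K) - 2) ^ k * b ^ k by
        rw [neg_eq_neg_one_mul, mul_pow, mul_pow, mul_pow]; ring]
  set C := ((n - 3 - k).choose k : K)
  set C' := ((n - 4 - k).choose k : K)
  set ρ := (k : K) * C / ((n : K) - k - 3)
  set s := -((n : K) - 1) * a
  -- `S_k = s² A + (b²-term)`; the exponent `j - 1` is negative only for `j = 0`, where the
  -- `b²`-coefficient `C(n-k-4, k)` vanishes.
  set A := ((n : K) - 1) * a ^ 2 * C -
    (n : K) * ((5 * n - 8) * C - (n - 2) * ρ) * b / ((n : K) - 1)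
  have hsign : (-1 : K) ^ n * (((n : K) - 1) ^ ((j : ℤ) - 1) * a ^ ((j : ℤ) - 1)) =
      s ^ ((j : ℤ) - 1) := by
    rw [show s = (-1) * (((n : K) - 1) * a) by ring, mul_zpow (-1 : K),
      zpow_sub_one₀ (by norm_num : (-1 : K) ≠ 0), zpow_natCast, ← mul_zpow, hj, pow_add,
      pow_add, pow_mul, neg_one_sq, one_pow]
    ring
  have hS : ((n : K) - 1) ^ 3 * C * a ^ 4 -
        ((n : K) * ((n : K) - 1) *
            (5 * (n : K) ^ 2 - (6 * (k : K) + 23) * (n : K) + 10 * (k : K) + 24) /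
          ((n : K) - (k : K) - 3)) * C * a ^ 2 * b +
        4 * (n : K) ^ 2 * ((n : K) - 2) * C' * b ^ 2 =
      s ^ 2 * A + 4 * (n : K) ^ 2 * ((n : K) - 2) * b ^ 2 * C' := by
    simp only [A, ρ, s]
    field_simp
    ring
  have hA : s * A = (-((n : K) - 1) ^ 2 * a ^ 3 + (n : K) * (5 * (n : K) - 8) * a * b) * C -
      (n : K) * ((n : K) - 2) * a * b * ρ := by
    simp only [A, s]
    field_simp
    ring
  have hz := zpow_natCast_sub_one_mul s A (4 * (n : K) ^ 2 * ((n : K) - 2) * b ^ 2 * C') j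
    fun h => by rw [hC' h, mul_zero]
  rw [hS]
  linear_combination (2 ^ (n - 3) * (-1) ^ k * (n : K) ^ k * ((n : K) - 2) ^ k * b ^ k) *
      ((s ^ 2 * A + 4 * (n : K) ^ 2 * ((n : K) - 2) * b ^ 2 * C') * hsign + hz + s ^ j * hA)

theorem sum_rhs_summand_eq (n : ℕ) (hn : 5 ≤ n) (a b : K) :
    ∑ k ∈ range ((n - 3) / 2 + 1),
      (-1 : K) ^ (n + k) * 2 ^ (n - 3) * (n : K) ^ k *
        ((n : K) - 1) ^ ((n : ℤ) - 2 * k - 4) * ((n : K) - 2) ^ k *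
        a ^ ((n : ℤ) - 2 * k - 4) * b ^ k *
        (((n : K) - 1) ^ 3 * ((n - k - 3).choose k : K) * a ^ 4 -
          ((n : K) * ((n : K) - 1) *
              (5 * (n : K) ^ 2 - (6 * (k : K) + 23) * (n : K) + 10 * (k : K) + 24) /
            ((n : K) - (k : K) - 3)) * ((n - k - 3).choose k : K) * a ^ 2 * b +
          4 * (n : K) ^ 2 * ((n : K) - 2) * ((n - k - 4).choose k : K) * b ^ 2) =
      2 ^ (n - 3) *
        ((-((n : K) - 1) ^ 2 * a ^ 3 + (n : K) * (5 * (n : K) - 8) * a * b) *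
            (dickson 2 ((n : K) * ((n : K) - 2) * b) (n - 3)).eval (-((n : K) - 1) * a) +
          (n : K) * ((n : K) - 2) * a * b * ((n : K) * ((n : K) - 2) * b) *
            (dickson 2 ((n : K) * ((n : K) - 2) * b) (n - 5)).eval (-((n : K) - 1) * a) +
          4 * (n : K) ^ 2 * ((n : K) - 2) * b ^ 2 *
            (dickson 2 ((n : K) * ((n : K) - 2) * b) (n - 4)).eval (-((n : K) - 1) * a)) := by
  rw [sum_congr rfl fun k hk =>
      rhs_summand_eq n k (by omega) (by have := mem_range.1 hk; omega) a b,
    ← mul_sum, sum_add_distrib, sum_sub_distrib, ← mul_sum, ← mul_sum, ← mul_sum,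
    ← dickson_two_eval_eq_sum_choose _ _ (n - 3) _ (by omega),
    ← dickson_two_eval_eq_sum_choose _ _ (n - 4) _ (by omega),
    sum_mul_choose_div_eq_neg_mul_dickson _ _ n hn]
  ring

end RightHandSide

theorem FI_GHJ_identity (n : ℕ) (hn : 5 ≤ n) (a b : ℝ)
    (H F G I J : ℝ)
    (hH : H = ((n : ℝ) - 1) ^ 2 * a ^ 2 - 4 * (n : ℝ) * ((n : ℝ) - 2) * b)
    (hF : F = ((n : ℝ) - 1) ^ 2 * a ^ 3 - 2 * (n : ℝ) * (2 * (n : ℝ) - 3) * a * b)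
    (hG : G = ((n : ℝ) - 1) * a ^ 2 - 2 * (n : ℝ) * b)
    (hI : I = ∑ l ∈ Finset.range ((n - 3) / 2 + 1),
        ((n - 3).choose (2 * l) : ℝ) * (-((n : ℝ) - 1) * a) ^ (n - 2 * l - 3) * H ^ l)
    (hJ : J = ∑ l ∈ Finset.range ((n - 3) / 2 + 1),
        ((n - 3).choose (2 * l + 1) : ℝ) * (-((n : ℝ) - 1) * a) ^ ((n : ℤ) - 2 * l - 4) * H ^ l) :
    -F * I + G * H * J =
      ∑ k ∈ Finset.range ((n - 3) / 2 + 1),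
        (-1 : ℝ) ^ (n + k) * 2 ^ (n - 3) * (n : ℝ) ^ k *
          ((n : ℝ) - 1) ^ ((n : ℤ) - 2 * k - 4) * ((n : ℝ) - 2) ^ k *
          a ^ ((n : ℤ) - 2 * k - 4) * b ^ k *
          (((n : ℝ) - 1) ^ 3 * ((n - k - 3).choose k : ℝ) * a ^ 4 -
            ((n : ℝ) * ((n : ℝ) - 1) *
                (5 * (n : ℝ) ^ 2 - (6 * (k : ℝ) + 23) * (n : ℝ) + 10 * (k : ℝ) + 24) /
              ((n : ℝ) - (k : ℝ) - 3)) * ((n - k - 3).choose k : ℝ) * a ^ 2 * b +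
            4 * (n : ℝ) ^ 2 * ((n : ℝ) - 2) * ((n - k - 4).choose k : ℝ) * b ^ 2) := by
  apply Complex.ofReal_injective
  push_cast [hH, hF, hG, hI, hJ]
  rw [sum_rhs_summand_eq n hn, show ((n : ℂ) - 1) ^ 2 * a ^ 2 - 4 * n * (n - 2) * b =
    (-((n : ℂ) - 1) * a) ^ 2 - 4 * (n * (n - 2) * b) by ring]
  obtain ⟨u, v, hs, hp⟩ :=
    IsAlgClosed.exists_add_eq_and_mul_eq (-((n : ℂ) - 1) * a) (n * (n - 2) * b)
  have hI' := two_mul_sum_even_choose_eq_dickson u v n hn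
  have hJ' := two_mul_mul_sum_odd_choose_eq_dickson u v n (by omega)
  rw [hs, hp] at hI' hJ'
  have hrec := congrArg (eval (-((n : ℂ) - 1) * a))
    (dickson_of_two_le 2 ((n : ℂ) * (n - 2) * b) (by omega : 2 ≤ n - 3))
  rw [show n - 3 - 1 = n - 4 by omega, show n - 3 - 2 = n - 5 by omega, eval_sub, eval_mul,
    eval_mul, eval_X, eval_C] at hrec
  -- The multiple of `hrec` is read off from the coefficient of `E_{n-3}`.
  linear_combination (-(((n : ℂ) - 1) ^ 2 * a ^ 3 - 2 * n * (2 * n - 3) * a * b) / 2) * hI' +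
    ((((n : ℂ) - 1) * a ^ 2 - 2 * n * b) / 2) * hJ' +
    (2 ^ (n - 3) / 2 * (-(((n : ℂ) - 1) ^ 2 * a ^ 3 - 2 * n * (2 * n - 3) * a * b) -
      2 * (-((n : ℂ) - 1) ^ 2 * a ^ 3 + n * (5 * n - 8) * a * b))) * hrec
end

section
/- Let n ≥ 5 be an integer and a ≠ 0 a real number, and set b = (n−1)²a²/(4n(n−2)). Set m₀ = ⌊(n−3)/2⌋, for 0 ≤ k ≤ m₀ let S_k = (n−1)³·C(n−k−3,k)·a⁴ − [n(n−1)(5n² − (6k+23)n + 10k + 24)/(n−k−3)]·C(n−k−3,k)·a²b + 4n²(n−2)·C(n−k−4,k)·b², let γ = Σ_{k=0}^{m₀} (−1)^{n+k} n^k (n−1)^{n−2k−4} (n−2)^k a^{n−2k−4} b^k S_k, and let Q(t) = (n−2)^{n−2}(a² − 4b)t² + γ t − nⁿ b^{n−1}. Then for every real t, Q(t) = −[(n−2)^{n−3}a²/n]·( t + (−1)^n n (n−1)^{n−1} a^{n−2} / (2^{n−1}(n−2)^{n−2}) )²; in particular the discriminant γ² + 4·(n−2)^{n−2}(a² − 4b)·nⁿ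 b^{n−1} of the quadratic Q is zero. -/
/-!
At the critical value of `b` we have `n (n - 2) b = ((n - 1) a / 2) ^ 2`, so the `k`-th summand of `γ`
is `(-1)ⁿ ((n - 1) a)ⁿ⁻⁴ (-1/4)ᵏ S_k`, and `S_k` collapses to a multiple of `m / (m - k) · C(m - k, k)`
with `m = n - 3`. Hence `γ` is a constant times the Lucas sum `∑ₖ xᵏ m / (m - k) C(m - k, k)` at
`x = -1/4`, which equals `J(m) + x J(m - 2)` for the Jacobsthal sums `J(m) = ∑ₖ xᵏ C(m - k, k)`.
These satisfy `J(m + 2) = J(m + 1) + x J(m)`, whose characteristic polynomial `λ² - λ + 1/4` has the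
double root `1/2`; so `J(m) = (m + 1) / 2ᵐ` and the Lucas sum is `2 / 2ᵐ`. With `γ` in closed form and
`a² - 4b = -a² / (n (n - 2))`, comparing coefficients exhibits `Q` as `-c (t + r)²`, and such a
quadratic has zero discriminant.
-/

open Finset

theorem sum_range_half_choose_eq_sum_range {M : Type*} [AddCommMonoid M] (f : ℕ → ℕ → M)
    (hf : ∀ k, f k 0 = 0) (m : ℕ) :
    ∑ k ∈ range (m / 2 + 1), f k ((m - k).choose k) =
      ∑ k ∈ range (m + 1), f k ((m - k).choose k) := by
  refine sum_subset (fun k hk => by simp only [mem_range] at hk ⊢; omega) fun k _ hk => ?_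
  simp only [mem_range, not_lt] at hk
  rw [Nat.choose_eq_zero_of_lt (by omega), hf]

section Jacobsthal

variable {R : Type*} [CommRing R]

/-- The Jacobsthal polynomial `J_{m+1}(x)`, evaluated at `x`. -/
def jacobsthal (x : R) (m : ℕ) : R :=
  ∑ k ∈ range (m + 1), x ^ k * ((m - k).choose k : R)

theorem jacobsthal_add_two (x : R) (m : ℕ) :
    jacobsthal x (m + 2) = jacobsthal x (m + 1) + x * jacobsthal x m := by
  have hpascal : ∀ k ∈ range (m + 1), x ^ (k + 1) * ((m + 2 - (k + 1)).choose (k + 1) : R) =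
      x ^ (k + 1) * ((m + 1 - (k + 1)).choose (k + 1) : R) +
        x * (x ^ k * ((m - k).choose k : R)) := by
    intro k hk
    rw [mem_range] at hk
    rw [show m + 2 - (k + 1) = m - k + 1 by omega, show m + 1 - (k + 1) = m - k by omega,
      Nat.choose_succ_succ']
    push_cast
    ring
  rw [jacobsthal, sum_range_succ', sum_range_succ, Nat.choose_eq_zero_of_lt (by omega),
    sum_congr rfl hpascal, sum_add_distrib, ← mul_sum, jacobsthal, jacobsthal,
    sum_range_succ' _ (m + 1)]
  simp only [Nat.reduceSubDiff, Nat.cast_zero, mul_zero, add_zero, pow_zero, tsub_zero,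
    Nat.choose_zero_right, Nat.cast_one, mul_one]
  ring

end Jacobsthal

section Field

variable {K : Type*} [Field K]

theorem four_pow_mul_gamma_prefactor_eq {N a b : K} (e : ℤ) (k : ℕ) (hN1 : N - 1 ≠ 0)
    (ha : a ≠ 0) (hb : ((N - 1) * a) ^ 2 = 4 * (N * (N - 2) * b)) :
    4 ^ k * (N ^ k * (N - 1) ^ e * (N - 2) ^ k * a ^ e * b ^ k) = ((N - 1) * a) ^ (e + 2 * k) := by
  rw [zpow_add₀ (mul_ne_zero hN1 ha), mul_zpow,
    show (2 * k : ℤ) = ((2 * k : ℕ) : ℤ) by push_cast; ring, zpow_natCast, pow_mul, hb,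
    mul_pow, mul_pow, mul_pow]
  ring

variable [CharZero K]

theorem jacobsthal_neg_quarter (m : ℕ) : jacobsthal (-1 / 4 : K) m = (m + 1) / 2 ^ m := by
  induction m using Nat.twoStepInduction with
  | zero => simp [jacobsthal]
  | one => simp [jacobsthal, sum_range_succ]
  | more m ih₀ ih₁ =>
    rw [jacobsthal_add_two, ih₀, ih₁]
    push_cast
    field_simp
    ring

theorem succ_div_mul_choose_eq_choose {m j : ℕ} (hj : j ≤ m) :
    ((j + 1 : ℕ) : K) / ((m : K) + 2 - (j + 1 : ℕ)) * ((m + 2 - (j + 1)).choose (j + 1) : K) =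
      (m - j).choose j := by
  have hden : (m : K) + 2 - (j + 1 : ℕ) = ((m - j : ℕ) : K) + 1 := by
    push_cast [Nat.cast_sub hj]
    ring
  have hchoose : ((m - j : ℕ) + 1 : K) * (m - j).choose j =
      (m - j + 1).choose (j + 1) * (j + 1 : ℕ) := by
    exact_mod_cast Nat.add_one_mul_choose_eq (m - j) j
  rw [hden, show m + 2 - (j + 1) = m - j + 1 by omega, div_mul_eq_mul_div,
    div_eq_iff (Nat.cast_add_one_ne_zero _)]
  linear_combination -hchoose

/-- The Lucas polynomial identity `L_{m+2}(x) = J_{m+3}(x) + x J_{m+1}(x)`. -/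
theorem sum_div_mul_choose_eq_jacobsthal_add_mul (x : K) (m : ℕ) :
    ∑ k ∈ range (m + 3), x ^ k * ((m + 2 : K) / (m + 2 - k)) * ((m + 2 - k).choose k : K) =
      jacobsthal x (m + 2) + x * jacobsthal x m := by
  have hsplit : ∀ k ∈ range (m + 3),
      x ^ k * ((m + 2 : K) / (m + 2 - k)) * ((m + 2 - k).choose k : K) =
        x ^ k * ((m + 2 - k).choose k : K) +
          x ^ k * ((k : K) / (m + 2 - k)) * ((m + 2 - k).choose k : K) := by
    intro k _
    rcases lt_or_ge (m + 2 - k) k with hk | hk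
    · simp [Nat.choose_eq_zero_of_lt hk]
    · have hden : (m : K) + 2 - k ≠ 0 := by
        rw [show (m : K) + 2 - k = ((m + 2 - k : ℕ) : K) by
          rw [Nat.cast_sub (by omega)]; push_cast; ring]
        exact_mod_cast (by omega : m + 2 - k ≠ 0)
      field_simp
      ring
  have hshift : ∀ j ∈ range (m + 2), x ^ (j + 1) * (((j + 1 : ℕ) : K) / (m + 2 - (j + 1 : ℕ))) *
      ((m + 2 - (j + 1)).choose (j + 1) : K) = x * (x ^ j * ((m - j).choose j : K)) := by
    intro j hj
    rw [mem_range] at hj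
    rcases le_or_gt j m with hjm | hjm
    · rw [mul_assoc, succ_div_mul_choose_eq_choose hjm]
      ring
    · rw [Nat.choose_eq_zero_of_lt (by omega : m + 2 - (j + 1) < j + 1),
        Nat.choose_eq_zero_of_lt (by omega : m - j < j)]
      simp
  rw [sum_congr rfl hsplit, sum_add_distrib, sum_range_succ' (fun k => x ^ k * ((k : K) / _) * _),
    sum_congr rfl hshift, ← mul_sum, jacobsthal, jacobsthal,
    sum_range_succ (fun j => x ^ j * ((m - j).choose j : K)) (m + 1),
    Nat.choose_eq_zero_of_lt (by omega : m - (m + 1) < m + 1)]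
  simp

theorem sum_range_half_neg_quarter_div_mul_choose {m : ℕ} (hm : 2 ≤ m) :
    ∑ k ∈ range (m / 2 + 1), (-1 / 4 : K) ^ k * ((m : K) / (m - k)) * ((m - k).choose k : K) =
      2 / 2 ^ m := by
  obtain ⟨m, rfl⟩ : ∃ p, m = p + 2 := ⟨m - 2, by omega⟩
  rw [sum_range_half_choose_eq_sum_range
    (fun k c => (-1 / 4 : K) ^ k * (((m + 2 : ℕ) : K) / ((m + 2 : ℕ) - k)) * c) (fun k => by simp)]
  push_cast
  rw [sum_div_mul_choose_eq_jacobsthal_add_mul, jacobsthal_neg_quarter, jacobsthal_neg_quarter]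
  push_cast
  field_simp
  ring

theorem gamma_bracket_eq {N k C C' a b : K} (hN : N ≠ 0) (hN2 : N - 2 ≠ 0) (hk : N - k - 3 ≠ 0)
    (hb : b = (N - 1) ^ 2 * a ^ 2 / (4 * N * (N - 2)))
    (hC : (N - k - 3) * C' = (N - 2 * k - 3) * C) :
    (N - 1) ^ 3 * C * a ^ 4 -
        N * (N - 1) * (5 * N ^ 2 - (6 * k + 23) * N + 10 * k + 24) / (N - k - 3) * C * a ^ 2 * b +
        4 * N ^ 2 * (N - 2) * C' * b ^ 2 =
      -((N - 1) ^ 3 * a ^ 4 * (N - 3) / (4 * (N - 2) * (N - k - 3))) * C := by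
  have hC' : C' = (N - 2 * k - 3) * C / (N - k - 3) := by
    rw [eq_div_iff hk, ← hC]
    ring
  subst hb hC'
  field_simp
  ring

theorem gamma_summand_eq {n k : ℕ} (hn : 4 ≤ n) (hk : 2 * k ≤ n - 3) {a b : K} (ha : a ≠ 0)
    (hb : b = ((n : K) - 1) ^ 2 * a ^ 2 / (4 * (n : K) * ((n : K) - 2))) :
    (-1 : K) ^ (n + k) * (n : K) ^ k * ((n : K) - 1) ^ ((n : ℤ) - 2 * k - 4) *
          ((n : K) - 2) ^ k * a ^ ((n : ℤ) - 2 * k - 4) * b ^ k *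
          (((n : K) - 1) ^ 3 * ((n - k - 3).choose k : K) * a ^ 4 -
            ((n : K) * ((n : K) - 1) *
                (5 * (n : K) ^ 2 - (6 * (k : K) + 23) * (n : K) + 10 * (k : K) + 24) /
              ((n : K) - (k : K) - 3)) * ((n - k - 3).choose k : K) * a ^ 2 * b +
            4 * (n : K) ^ 2 * ((n : K) - 2) * ((n - k - 4).choose k : K) * b ^ 2) =
      -(-1) ^ n * ((n : K) - 1) ^ (n - 1) * a ^ n / (4 * ((n : K) - 2)) *
        ((-1 / 4) ^ k * (((n - 3 : ℕ) : K) / ((n - 3 : ℕ) - k)) * ((n - 3 - k).choose k : K)) := by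
  have hN0 : (n : K) ≠ 0 := by exact_mod_cast (by omega : n ≠ 0)
  have hN1 : (n : K) - 1 ≠ 0 := by rw [sub_ne_zero]; exact_mod_cast (by omega : n ≠ 1)
  have hN2 : (n : K) - 2 ≠ 0 := by rw [sub_ne_zero]; exact_mod_cast (by omega : n ≠ 2)
  have hNk : (n : K) - k - 3 ≠ 0 := by
    rw [sub_sub, sub_ne_zero]
    exact_mod_cast (by omega : n ≠ k + 3)
  have hchoose : ((n : K) - k - 3) * ((n - k - 4).choose k : K) =
      ((n : K) - 2 * k - 3) * ((n - k - 3).choose k : K) := by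
    have h := Nat.choose_mul_succ_eq (n - k - 4) k
    rw [show n - k - 4 + 1 = n - k - 3 by omega, show n - k - 3 - k = n - 2 * k - 3 by omega] at h
    have h' := congrArg (Nat.cast : ℕ → K) h
    push_cast [Nat.cast_sub (by omega : 3 ≤ n - k), Nat.cast_sub (by omega : k ≤ n),
      Nat.cast_sub (by omega : 3 ≤ n - 2 * k), Nat.cast_sub (by omega : 2 * k ≤ n)] at h'
    linear_combination h'
  set N : K := (n : K)
  set e : ℤ := (n : ℤ) - 2 * k - 4 with he
  have hprefactor : N ^ k * (N - 1) ^ e * (N - 2) ^ k * a ^ e * b ^ k =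
      ((N - 1) * a) ^ (n - 4) / 4 ^ k := by
    have hb' : ((N - 1) * a) ^ 2 = 4 * (N * (N - 2) * b) := by
      rw [hb]
      field_simp
    rw [eq_div_iff (pow_ne_zero _ (by norm_num)), mul_comm,
      four_pow_mul_gamma_prefactor_eq e k hN1 ha hb',
      show e + 2 * k = ((n - 4 : ℕ) : ℤ) by push_cast [he, Nat.cast_sub hn]; ring, zpow_natCast]
  calc _ = (-1) ^ (n + k) * (N ^ k * (N - 1) ^ e * (N - 2) ^ k * a ^ e * b ^ k) *
        (-((N - 1) ^ 3 * a ^ 4 * (N - 3) / (4 * (N - 2) * (N - k - 3))) *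
          ((n - k - 3).choose k : K)) := by
        rw [gamma_bracket_eq hN0 hN2 hNk hb hchoose]
        ring
    _ = _ := by
      have hcast : ((n - 3 : ℕ) : K) = N - 3 := by rw [Nat.cast_sub (by omega)]; rfl
      have hNk' : N - 3 - k ≠ 0 := by rwa [sub_right_comm]
      obtain ⟨q, rfl⟩ : ∃ q, n = q + 4 := ⟨n - 4, by omega⟩
      rw [hprefactor, Nat.sub_right_comm _ 3 k, hcast, div_pow, mul_pow, Nat.add_sub_cancel,
        show q + 4 - 1 = q + 3 by omega]
      field_simp
      ring

theorem gamma_sum_eq {n : ℕ} (hn : 5 ≤ n) {a b : K} (ha : a ≠ 0)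
    (hb : b = ((n : K) - 1) ^ 2 * a ^ 2 / (4 * (n : K) * ((n : K) - 2))) :
    ∑ k ∈ range ((n - 3) / 2 + 1),
        (-1 : K) ^ (n + k) * (n : K) ^ k * ((n : K) - 1) ^ ((n : ℤ) - 2 * k - 4) *
          ((n : K) - 2) ^ k * a ^ ((n : ℤ) - 2 * k - 4) * b ^ k *
          (((n : K) - 1) ^ 3 * ((n - k - 3).choose k : K) * a ^ 4 -
            ((n : K) * ((n : K) - 1) *
                (5 * (n : K) ^ 2 - (6 * (k : K) + 23) * (n : K) + 10 * (k : K) + 24) /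
              ((n : K) - (k : K) - 3)) * ((n - k - 3).choose k : K) * a ^ 2 * b +
            4 * (n : K) ^ 2 * ((n : K) - 2) * ((n - k - 4).choose k : K) * b ^ 2) =
      -(-1) ^ n * ((n : K) - 1) ^ (n - 1) * a ^ n / (4 * ((n : K) - 2)) * (2 / 2 ^ (n - 3)) := by
  rw [sum_congr rfl fun k hk =>
      gamma_summand_eq (by omega) (by simp only [mem_range] at hk; omega) ha hb,
    ← mul_sum, sum_range_half_neg_quarter_div_mul_choose (by omega)]

theorem quadratic_eq_neg_mul_sq {N a b γ s : K} (m : ℕ) (hN0 : N ≠ 0) (hN2 : N - 2 ≠ 0)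
    (hs : s ^ 2 = 1) (hb : b = (N - 1) ^ 2 * a ^ 2 / (4 * N * (N - 2)))
    (hγ : γ = -s * (N - 1) ^ (m + 2) * a ^ (m + 3) / (4 * (N - 2)) * (2 / 2 ^ m)) (t : K) :
    (N - 2) ^ (m + 1) * (a ^ 2 - 4 * b) * t ^ 2 + γ * t - N ^ (m + 3) * b ^ (m + 2) =
      -((N - 2) ^ m * a ^ 2 / N) *
        (t + s * N * (N - 1) ^ (m + 2) * a ^ (m + 1) / (2 ^ (m + 2) * (N - 2) ^ (m + 1))) ^ 2 := by
  set c := (N - 2) ^ m * a ^ 2 / N with hc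
  set R := N * (N - 1) ^ (m + 2) * a ^ (m + 1) / (2 ^ (m + 2) * (N - 2) ^ (m + 1)) with hR
  have hA : (N - 2) ^ (m + 1) * (a ^ 2 - 4 * b) = -c := by
    rw [hb, hc]
    field_simp
    ring
  have hB : γ = -2 * c * s * R := by
    rw [hγ, hc, hR]
    field_simp
    ring
  have hC : N ^ (m + 3) * b ^ (m + 2) = c * R ^ 2 := by
    rw [hb, hc, hR, div_pow, div_pow, mul_pow, mul_pow, mul_pow, mul_pow, mul_pow, ← pow_mul,
      ← pow_mul, ← pow_mul, show (4 : K) ^ (m + 2) = 2 ^ (2 * (m + 2)) by rw [pow_mul]; norm_num]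
    field_simp
    ring
  rw [hA, hB, hC]
  linear_combination c * R ^ 2 * hs

theorem discrim_eq_zero_of_forall_eq_neg_mul_sq {A B C c r : K}
    (h : ∀ t, A * t ^ 2 + B * t - C = -c * (t + r) ^ 2) : discrim A B (-C) = 0 := by
  have hA : A = -c := by linear_combination (h 1 + h (-1)) / 2 - h 0
  have hB : B = -2 * c * r := by linear_combination (h 1 - h (-1)) / 2
  have hC : C = c * r ^ 2 := by linear_combination -h 0
  rw [discrim, hA, hB, hC]
  ring

end Field

theorem Q_perfect_square_at_critical_b (n : ℕ) (hn : 5 ≤ n) (a : ℝ) (ha : a ≠ 0)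
    (b : ℝ) (hb : b = ((n : ℝ) - 1) ^ 2 * a ^ 2 / (4 * (n : ℝ) * ((n : ℝ) - 2)))
    (γ : ℝ)
    (hγ : γ = ∑ k ∈ Finset.range ((n - 3) / 2 + 1),
        (-1 : ℝ) ^ (n + k) * (n : ℝ) ^ k * ((n : ℝ) - 1) ^ ((n : ℤ) - 2 * k - 4) *
          ((n : ℝ) - 2) ^ k * a ^ ((n : ℤ) - 2 * k - 4) * b ^ k *
          (((n : ℝ) - 1) ^ 3 * ((n - k - 3).choose k : ℝ) * a ^ 4 -
            ((n : ℝ) * ((n : ℝ) - 1) *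
                (5 * (n : ℝ) ^ 2 - (6 * (k : ℝ) + 23) * (n : ℝ) + 10 * (k : ℝ) + 24) /
              ((n : ℝ) - (k : ℝ) - 3)) * ((n - k - 3).choose k : ℝ) * a ^ 2 * b +
            4 * (n : ℝ) ^ 2 * ((n : ℝ) - 2) * ((n - k - 4).choose k : ℝ) * b ^ 2))
    (Q : ℝ → ℝ)
    (hQ : ∀ t : ℝ, Q t = ((n : ℝ) - 2) ^ (n - 2) * (a ^ 2 - 4 * b) * t ^ 2 + γ * t -
        (n : ℝ) ^ n * b ^ (n - 1)) :
    (∀ t : ℝ, Q t = -(((n : ℝ) - 2) ^ (n - 3) * a ^ 2 / (n : ℝ)) *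
        (t + (-1 : ℝ) ^ n * (n : ℝ) * ((n : ℝ) - 1) ^ (n - 1) * a ^ (n - 2) /
          (2 ^ (n - 1) * ((n : ℝ) - 2) ^ (n - 2))) ^ 2) ∧
      γ ^ 2 + 4 * ((n : ℝ) - 2) ^ (n - 2) * (a ^ 2 - 4 * b) * (n : ℝ) ^ n * b ^ (n - 1) = 0 := by
  have hγ' := hγ.trans (gamma_sum_eq hn ha hb)
  have hN0 : (n : ℝ) ≠ 0 := by exact_mod_cast (by omega : n ≠ 0)
  have hN2 : (n : ℝ) - 2 ≠ 0 := by rw [sub_ne_zero]; exact_mod_cast (by omega : n ≠ 2)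
  have hs : ((-1 : ℝ) ^ n) ^ 2 = 1 := by rw [← pow_mul, mul_comm, pow_mul, neg_one_sq, one_pow]
  obtain ⟨m, rfl⟩ : ∃ m, n = m + 3 := ⟨n - 3, by omega⟩
  simp only [Nat.add_sub_cancel, show m + 3 - 2 = m + 1 by omega, show m + 3 - 1 = m + 2 by omega]
    at hγ' hQ ⊢
  have hsq : ∀ t, Q t = _ := fun t => (hQ t).trans (quadratic_eq_neg_mul_sq m hN0 hN2 hs hb hγ' t)
  refine ⟨hsq, ?_⟩
  have hdisc := discrim_eq_zero_of_forall_eq_neg_mul_sq fun t => (hQ t).symm.trans (hsq t)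
  rw [discrim] at hdisc
  linear_combination hdisc
end

section
/- Let a be a real number and set b = 9a²/32 (the value (n−1)²a²/(4n(n−2)) for n = 4). Then for every real t, the discriminant of the polynomial x⁴ + t(x² + ax + b) in x equals (1/2)·a²·( t + (27/8)a² )²·t³. -/
open Polynomial

/-!
Over `ℂ` the product `∏ f'(r)` in `polyDisc f` is the resultant `Res(f, f')`, so `polyDisc` agrees
with Mathlib's Sylvester-matrix discriminant `Polynomial.discr`. Dividing the quartic
`f = x⁴ + t(x² + ax + b)` by `f' = 4x³ + 2tx + at` leaves the remainder `(t/2)(x + 3a/4)²`; the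
value `b = 9a²/32` is exactly the one making this remainder a square. Hence
`Res(f', f) = 4² Res(f', (t/2)(x + 3a/4)²) = 4² (t/2)³ f'(-3a/4)²`,
and `f'(-3a/4) = -(a/2)(t + 27a²/8)`.
-/

theorem polyDisc_eq_discr (f : ℝ[X]) (hf : 2 ≤ f.natDegree) :
    polyDisc f = algebraMap ℝ ℂ f.discr := by
  set F := f.map (algebraMap ℝ ℂ)
  have hres := resultant_eq_prod_eval F (derivative F) (f.natDegree - 1)
    (by rw [← natDegree_map (f := algebraMap ℝ ℂ)]; exact natDegree_derivative_le F)
    (IsAlgClosed.splits F)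
  rw [natDegree_map, leadingCoeff_map, derivative_map, resultant_map_map,
    resultant_deriv (natDegree_pos_iff_degree_pos.mp (by omega)), ← derivative_map] at hres
  simp only [map_mul, map_pow, map_neg, map_one] at hres
  unfold polyDisc
  set c := algebraMap ℝ ℂ f.leadingCoeff
  set s : ℂ := (-1) ^ (f.natDegree * (f.natDegree - 1) / 2)
  have hc : c ≠ 0 := by
    simpa [c] using leadingCoeff_ne_zero.mpr (ne_zero_of_natDegree_gt (n := 1) hf)
  have hs : s * s = 1 := by rw [← pow_add, ← two_mul, pow_mul]; simp
  have hpow : c ^ (f.natDegree - 1) = c * c ^ (f.natDegree - 2) := by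
    rw [← pow_succ']; congr 1; omega
  rw [hpow] at hres
  apply mul_left_cancel₀ hc
  linear_combination (-s) * hres + c * algebraMap ℝ ℂ f.discr * hs

section CritQuartic

variable {K : Type*} [Field K]

noncomputable def critQuartic (a t : K) : K[X] :=
  X ^ 4 + C t * (X ^ 2 + C a * X + C (9 * a ^ 2 / 32))

theorem natDegree_critQuartic (a t : K) : (critQuartic a t).natDegree = 4 := by
  unfold critQuartic; compute_degree!

theorem monic_critQuartic (a t : K) : (critQuartic a t).Monic := by
  unfold critQuartic; monicity!

theorem derivative_critQuartic (a t : K) :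
    derivative (critQuartic a t) = C 4 * X ^ 3 + C (2 * t) * X + C (a * t) := by
  simp only [critQuartic, derivative_add, derivative_mul, derivative_X_pow, derivative_C,
    derivative_X, map_mul, Nat.cast_ofNat]
  ring

variable [CharZero K]

theorem critQuartic_eq_add_derivative_mul (a t : K) :
    critQuartic a t =
      C (t / 2) * (X - C (-(3 * a / 4))) ^ 2 + derivative (critQuartic a t) * (C 4⁻¹ * X) := by
  rw [derivative_critQuartic]
  refine funext fun x => ?_
  simp only [critQuartic, eval_add, eval_mul, eval_pow, eval_sub, eval_C, eval_X]
  field_simp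
  ring

theorem discr_critQuartic (a t : K) :
    (critQuartic a t).discr = 1 / 2 * a ^ 2 * (t + 27 / 8 * a ^ 2) ^ 2 * t ^ 3 := by
  set f := critQuartic a t
  set g := derivative f
  have hg_eq : g = C 4 * X ^ 3 + C (2 * t) * X + C (a * t) := derivative_critQuartic a t
  have hdiv : f = C (t / 2) * (X - C (-(3 * a / 4))) ^ 2 + g * (C 4⁻¹ * X) :=
    critQuartic_eq_add_derivative_mul a t
  have hg : g.natDegree = 3 := by rw [hg_eq]; compute_degree!
  have hg_coeff : g.coeff 3 = 4 := by rw [hg_eq]; simp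
  calc f.discr = resultant f g 4 3 := by
        have := resultant_deriv (natDegree_pos_iff_degree_pos.mp
          (by rw [natDegree_critQuartic]; norm_num : 0 < f.natDegree))
        rw [natDegree_critQuartic, (monic_critQuartic a t).leadingCoeff] at this
        norm_num at this
        exact this.symm
    _ = resultant g f 3 4 := by rw [resultant_comm]; norm_num
    _ = resultant g (C (t / 2) * (X - C (-(3 * a / 4))) ^ 2) 3 (2 + 2) := by
        rw [hdiv]
        exact resultant_add_mul_right _ _ _ _ _ (by rw [natDegree_C_mul_X _ (by norm_num)]) hg.le
    _ = 4 ^ 2 * ((t / 2) ^ 3 * g.eval (-(3 * a / 4)) ^ 2) := by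
        rw [resultant_add_right_deg _ _ _ _ 2 (by compute_degree!), hg_coeff,
          resultant_C_mul_right, resultant_X_sub_C_pow_right _ _ _ _ hg.le]
        norm_num
    _ = 1 / 2 * a ^ 2 * (t + 27 / 8 * a ^ 2) ^ 2 * t ^ 3 := by
        simp only [hg_eq, eval_add, eval_mul, eval_pow, eval_C, eval_X]
        field_simp
        ring

end CritQuartic

theorem disc_quartic_critical (a : ℝ) (b : ℝ) (hb : b = 9 * a ^ 2 / 32) (t : ℝ) :
    polyDisc (X ^ 4 + C t * (X ^ 2 + C a * X + C b)) =
      (((1 / 2) * a ^ 2 * (t + (27 / 8) * a ^ 2) ^ 2 * t ^ 3 : ℝ) : ℂ) := by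
  subst hb
  change polyDisc (critQuartic a t) = _
  rw [polyDisc_eq_discr _ (by rw [natDegree_critQuartic]; norm_num), discr_critQuartic]
  rfl
end

section
/- Let q, r, s, t be complex numbers with q ≠ 0, and define the sequence (x_m) by x₀ = 0, x₁ = −qt, and x_{m+2} = −(r/q)·x_{m+1} − (s/q)·x_m for all m ≥ 0. Then for every integer m ≥ 1, s·x_m² − q·x_{m+1}² = q²·t·x_{2m+1}. -/
/-! The odd-index doubling identity is the case `n = m` of the addition formula
`q x₁ x_{m+n+1} = q x_{m+1} x_{n+1} - s x_m x_n`, the analogue of `Nat.fib_add`, which holds for any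
sequence with `x₀ = 0` satisfying `q x_{m+2} + r x_{m+1} + s x_m = 0`; substituting `x₁ = -q t`
gives the claim. -/

-- Inducting on `n` for all `m` at once lets the step use the hypothesis at `m + 1` and the
-- recurrence at `m` on the left factor, so `q` never has to be cancelled.
theorem addition_formula_of_quadratic_recurrence {R : Type*} [CommRing R] {q r s : R}
    {x : ℕ → R} (hx0 : x 0 = 0) (hrec : ∀ m, q * x (m + 2) + r * x (m + 1) + s * x m = 0)
    (n m : ℕ) : q * x 1 * x (m + n + 1) = q * x (m + 1) * x (n + 1) - s * x m * x n := by
  induction n generalizing m with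
  | zero => simp [hx0, mul_right_comm]
  | succ n ih =>
    have ih' : q * x 1 * x (m + n + 2) = q * x (m + 2) * x (n + 1) - s * x (m + 1) * x n := by
      simpa [add_right_comm m 1 n] using ih (m + 1)
    rw [show m + (n + 1) + 1 = m + n + 2 by ring]
    linear_combination ih' + x (n + 1) * hrec m - x (m + 1) * hrec n

theorem seq_index_doubling_odd (q r s t : ℂ) (hq : q ≠ 0)
    (x : ℕ → ℂ) (hx0 : x 0 = 0) (hx1 : x 1 = -q * t)
    (hxr : ∀ m : ℕ, x (m + 2) = -(r / q) * x (m + 1) - (s / q) * x m) :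
    ∀ m : ℕ, 1 ≤ m → s * x m ^ 2 - q * x (m + 1) ^ 2 = q ^ 2 * t * x (2 * m + 1) := by
  have hrec : ∀ m, q * x (m + 2) + r * x (m + 1) + s * x m = 0 := by
    intro m
    rw [hxr m]
    field_simp
    ring
  intro m _
  have hadd := addition_formula_of_quadratic_recurrence hx0 hrec m m
  rw [hx1, ← two_mul] at hadd
  linear_combination hadd
end
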